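/- arXiv:2501.04885 — 9 statements merged into one kernel-verified Lean document; each statement's English description precedes it below -/
import Mathlib

section
/- Let n ≥ 4 and let φ: ℝ^{n−3} → ℝ^{n−3} be the affine involution φ(d_1, d_2, d_3, d_4, …) = (d_1, 1−d_2, d_3, 1−d_4, …), which fixes odd-indexed coordinates and replaces each even-indexed coordinate d_j by 1−d_j. Then φ maps P_n(1) bijectively onto O_{n−3}, and φ preserves Lebesgue measure on ℝ^{n−3} (for every measurable S ⊆ ℝ^{n−3}, the Lebesgue measure of φ(S) equals that of S). -/
open scoped Classical

open MeasureTheory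

/-- `P_n(1) ⊆ ℝ^{n-3}` (0-indexed coordinates `d_0,…,d_{n-4}`): points of `[0,1]^{n-3}`
with `d_j + d_{j+1} ≥ 1` for consecutive coordinates. -/
def Pn1 (n : ℕ) : Set (Fin (n - 3) → ℝ) :=
  {d | (∀ j, d j ∈ Set.Icc (0 : ℝ) 1) ∧
    ∀ j : ℕ, ∀ h : j + 1 < n - 3, 1 ≤ d ⟨j, Nat.lt_of_succ_lt h⟩ + d ⟨j + 1, h⟩}

/-- The zig-zag order polytope `O_m ⊆ [0,1]^m` (0-indexed): `x_j ≥ x_{j+1}` for `j` even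
(1-indexed odd) and `x_j ≤ x_{j+1}` for `j` odd (1-indexed even). -/
def Ozz (m : ℕ) : Set (Fin m → ℝ) :=
  {x | (∀ j, x j ∈ Set.Icc (0 : ℝ) 1) ∧
    ∀ j : ℕ, ∀ h : j + 1 < m,
      if Even j then x ⟨j + 1, h⟩ ≤ x ⟨j, Nat.lt_of_succ_lt h⟩
      else x ⟨j, Nat.lt_of_succ_lt h⟩ ≤ x ⟨j + 1, h⟩}

/-- The affine involution `φ` fixing 1-indexed odd coordinates (0-indexed even) and sending
even-indexed coordinates `d_j` to `1 - d_j`. -/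
def phiMap (m : ℕ) (d : Fin m → ℝ) : Fin m → ℝ :=
  fun j => if Even (j : ℕ) then d j else 1 - d j

/-!
`φ` is an involution which reflects every odd-indexed (0-indexed) coordinate by `x ↦ 1 - x`.
Each such reflection preserves Lebesgue measure on `ℝ`, hence so does the product map. On a
consecutive pair exactly one coordinate is reflected, so `1 ≤ d_j + d_{j+1}` becomes the
zig-zag inequality between `φ(d)_j` and `φ(d)_{j+1}`; thus `P_n(1) = φ⁻¹(O_{n-3})`, and an
involution maps `φ⁻¹(t)` bijectively onto `t`.
-/

theorem Function.Involutive.bijOn_preimage {α : Type*} {f : α → α} (hf : f.Involutive)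
    (t : Set α) : Set.BijOn f (f ⁻¹' t) t :=
  Set.InvOn.bijOn ⟨fun x _ => hf x, fun x _ => hf x⟩ (Set.mapsTo_preimage f t)
    fun x hx => by rwa [Set.mem_preimage, hf x]

section phiMap

variable {m : ℕ}

theorem phiMap_involutive : Function.Involutive (phiMap m) := by
  intro d
  funext j
  by_cases hj : Even (j : ℕ) <;> simp [phiMap, hj]

theorem measurePreserving_phiMap : MeasurePreserving (phiMap m) :=
  volume_preserving_pi (α' := fun _ : Fin m => ℝ) (β' := fun _ => ℝ)
    (f := fun j x => if Even (j : ℕ) then x else 1 - x) fun j => by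
      by_cases hj : Even (j : ℕ)
      · simp only [hj, if_true]
        exact MeasurePreserving.id volume
      · simpa only [hj, if_false] using volume.measurePreserving_sub_left 1

theorem phiMap_apply_mem_Icc_iff (d : Fin m → ℝ) (j : Fin m) :
    phiMap m d j ∈ Set.Icc (0 : ℝ) 1 ↔ d j ∈ Set.Icc (0 : ℝ) 1 := by
  by_cases hj : Even (j : ℕ)
  · simp only [phiMap, hj, if_true]
  · simp only [phiMap, hj, if_false, Set.mem_Icc]
    constructor <;> rintro ⟨h₀, h₁⟩ <;> constructor <;> linarith

theorem phiMap_zigzag_iff (d : Fin m → ℝ) (j : ℕ) (h : j + 1 < m) :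
    (if Even j then phiMap m d ⟨j + 1, h⟩ ≤ phiMap m d ⟨j, Nat.lt_of_succ_lt h⟩
      else phiMap m d ⟨j, Nat.lt_of_succ_lt h⟩ ≤ phiMap m d ⟨j + 1, h⟩) ↔
    1 ≤ d ⟨j, Nat.lt_of_succ_lt h⟩ + d ⟨j + 1, h⟩ := by
  rcases Nat.even_or_odd j with hj | hj
  · have hj' : ¬Even (j + 1) := Nat.not_even_iff_odd.mpr hj.add_one
    simp only [phiMap, hj, hj', if_true, if_false]
    constructor <;> intro <;> linarith
  · have hj' : Even (j + 1) := hj.add_one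
    simp only [phiMap, Nat.not_even_iff_odd.mpr hj, hj', if_true, if_false]
    constructor <;> intro <;> linarith

end phiMap

theorem phiMap_preimage_Ozz (n : ℕ) : phiMap (n - 3) ⁻¹' Ozz (n - 3) = Pn1 n := by
  ext d
  simp only [Set.mem_preimage, Ozz, Pn1, Set.mem_ofPred_eq, phiMap_apply_mem_Icc_iff,
    phiMap_zigzag_iff]

theorem phi_bijOn_and_measure_preserving_general (n : ℕ) :
    Set.BijOn (phiMap (n - 3)) (Pn1 n) (Ozz (n - 3)) ∧
    ∀ S : Set (Fin (n - 3) → ℝ), MeasurableSet S →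
      volume (phiMap (n - 3) '' S) = volume S := by
  refine ⟨phiMap_preimage_Ozz n ▸ phiMap_involutive.bijOn_preimage _, fun S hS => ?_⟩
  rw [phiMap_involutive.image_eq_preimage_symm]
  exact measurePreserving_phiMap.measure_preimage hS.nullMeasurableSet

/-- for `n ≥ 4`, `φ` maps `P_n(1)` bijectively onto `O_{n-3}` and preserves
Lebesgue measure on `ℝ^{n-3}`. -/
theorem phi_bijOn_and_measure_preserving (n : ℕ) (hn : 4 ≤ n) :
    Set.BijOn (phiMap (n - 3)) (Pn1 n) (Ozz (n - 3)) ∧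
    ∀ S : Set (Fin (n - 3) → ℝ), MeasurableSet S →
      volume (phiMap (n - 3) '' S) = volume S :=
  phi_bijOn_and_measure_preserving_general n
end

section
/- Let m ≥ 1. (i) For every permutation τ of {1,…,m}, the orthoscheme Δ_τ has Lebesgue volume 1/m!. (ii) For distinct permutations τ ≠ τ′ of {1,…,m}, the intersection Δ_τ ∩ Δ_{τ′} has Lebesgue measure zero. (iii) If τ is down-up alternating then Δ_τ ⊆ O_m, and moreover O_m equals the union of the Δ_τ over all down-up alternating permutations τ of {1,…,m}. -/
open scoped Classical ENNReal

/-- A permutation of `{1,…,m}` (0-indexed on `Fin m`) is down-up alternating if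
`τ(1) > τ(2) < τ(3) > ⋯`. -/
def DownUp {m : ℕ} (τ : Equiv.Perm (Fin m)) : Prop :=
  ∀ i : ℕ, ∀ h : i + 1 < m,
    if Even i then τ ⟨i + 1, h⟩ < τ ⟨i, Nat.lt_of_succ_lt h⟩
    else τ ⟨i, Nat.lt_of_succ_lt h⟩ < τ ⟨i + 1, h⟩

/-- Up-down alternating: `τ(1) < τ(2) > τ(3) < ⋯`. -/
def UpDown {m : ℕ} (τ : Equiv.Perm (Fin m)) : Prop :=
  ∀ i : ℕ, ∀ h : i + 1 < m,
    if Even i then τ ⟨i, Nat.lt_of_succ_lt h⟩ < τ ⟨i + 1, h⟩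
    else τ ⟨i + 1, h⟩ < τ ⟨i, Nat.lt_of_succ_lt h⟩

/-- The Euler number `E_m`: the number of down-up alternating permutations of `{1,…,m}`. -/
noncomputable def eulerNumber (m : ℕ) : ℕ :=
  Nat.card {τ : Equiv.Perm (Fin m) // DownUp τ}

open MeasureTheory

/-- The orthoscheme `Δ_τ = {x ∈ [0,1]^m : x_{τ⁻¹(1)} ≤ ⋯ ≤ x_{τ⁻¹(m)}}`, expressed as:
`x_a ≤ x_b` whenever `τ a ≤ τ b`. -/
def orthoscheme {m : ℕ} (τ : Equiv.Perm (Fin m)) : Set (Fin m → ℝ) :=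
  {x | (∀ j, x j ∈ Set.Icc (0 : ℝ) 1) ∧ ∀ a b : Fin m, τ a ≤ τ b → x a ≤ x b}

/-!
Sorting the coordinates of a point of the cube, with ties broken by a fixed injective key,
yields a permutation `τ` with the point in `Δ_τ`. Two distinct orthoschemes meet inside a
hyperplane `x_a = x_b`, and permuting coordinates preserves volume, so the `m!` congruent
orthoschemes tile `[0,1]^m` and each has volume `1/m!`. A point of `O_m` with ties broken so
that odd positions precede even ones is sorted by a down-up alternating permutation.
-/

open Set

section Sorting

variable {m : ℕ} {α : Type*} [LinearOrder α]

theorem exists_perm_lt_iff_of_injective {f : Fin m → α} (hf : Function.Injective f) :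
    ∃ τ : Equiv.Perm (Fin m), ∀ a b, τ a < τ b ↔ f a < f b := by
  have hsort : StrictMono (f ∘ Tuple.sort f) :=
    (Tuple.monotone_sort f).strictMono_of_injective (hf.comp (Tuple.sort f).injective)
  refine ⟨(Tuple.sort f)⁻¹, fun a b => ?_⟩
  rw [← hsort.lt_iff_lt]
  simp

theorem Equiv.Perm.eq_of_lt_imp_lt [Finite α] {τ τ' : Equiv.Perm α}
    (h : ∀ a b, τ a < τ b → τ' a < τ' b) : τ' = τ := by
  have hmono : StrictMono (τ' ∘ τ.symm) := fun c d hcd =>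
    h _ _ (by simpa using hcd)
  exact Equiv.ext fun a => by simpa using congrFun hmono.eq_id (τ a)

end Sorting

variable {m : ℕ}

theorem isClosed_orthoscheme (τ : Equiv.Perm (Fin m)) : IsClosed (orthoscheme τ) := by
  simp only [orthoscheme, Set.ofPred_and, Set.ofPred_forall]
  exact (isClosed_iInter fun j => isClosed_Icc.preimage (continuous_apply j)).inter
    (isClosed_iInter fun a => isClosed_iInter fun b => isClosed_iInter fun _ =>
      isClosed_le (continuous_apply (A := fun _ => ℝ) a) (continuous_apply b))

theorem lt_of_mem_orthoscheme {τ : Equiv.Perm (Fin m)} {x : Fin m → ℝ} (hx : x ∈ orthoscheme τ)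
    {a b : Fin m} (h : x a < x b) : τ a < τ b :=
  lt_of_not_ge fun hba => (hx.2 b a hba).not_gt h

theorem exists_mem_orthoscheme_of_tiebreak {β : Type*} [LinearOrder β] {x : Fin m → ℝ}
    (hx : ∀ j, x j ∈ Icc (0 : ℝ) 1) {t : Fin m → β} (ht : Function.Injective t) :
    ∃ τ : Equiv.Perm (Fin m), x ∈ orthoscheme τ ∧ ∀ a b, x a = x b → t a < t b → τ a < τ b := by
  have hkey : Function.Injective fun a => toLex (x a, t a) := fun a b hab =>
    ht (congrArg (fun p => (ofLex p).2) hab)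
  obtain ⟨τ, hτ⟩ := exists_perm_lt_iff_of_injective hkey
  refine ⟨τ, ⟨hx, fun a b hab => ?_⟩, fun a b hxab htab => (hτ a b).2 ?_⟩
  · have : toLex (x a, t a) ≤ toLex (x b, t b) := by
      simpa only [not_lt, hτ] using hab.not_gt
    exact Prod.Lex.monotone_fst _ _ this
  · exact Prod.Lex.toLex_lt_toLex.2 (Or.inr ⟨hxab, htab⟩)

theorem iUnion_orthoscheme :
    ⋃ τ : Equiv.Perm (Fin m), orthoscheme τ = univ.pi fun _ => Icc (0 : ℝ) 1 := by
  refine Subset.antisymm (iUnion_subset fun τ x hx j _ => hx.1 j) fun x hx => ?_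
  obtain ⟨τ, hxτ, -⟩ := exists_mem_orthoscheme_of_tiebreak (fun j => hx j trivial)
    Function.injective_id
  exact mem_iUnion.2 ⟨τ, hxτ⟩

theorem orthoscheme_subset_Ozz {τ : Equiv.Perm (Fin m)} (hτ : DownUp τ) :
    orthoscheme τ ⊆ Ozz m := by
  refine fun x hx => ⟨hx.1, fun j hj => ?_⟩
  have := hτ j hj
  split_ifs at this ⊢
  all_goals exact hx.2 _ _ this.le

theorem Ozz_eq_biUnion_orthoscheme :
    Ozz m = ⋃ τ ∈ {τ : Equiv.Perm (Fin m) | DownUp τ}, orthoscheme τ := by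
  refine Subset.antisymm (fun x hx => ?_) (iUnion₂_subset fun τ hτ => orthoscheme_subset_Ozz hτ)
  -- Among equal coordinates, odd positions must precede even ones in the order of `τ`.
  let t : Fin m → ℕ := fun a => if Even (a : ℕ) then m + a else a
  have ht : Function.Injective t := fun a b hab => by
    simp only [t] at hab
    split_ifs at hab <;> omega
  obtain ⟨τ, hxτ, htie⟩ := exists_mem_orthoscheme_of_tiebreak hx.1 ht
  refine mem_biUnion (fun j hj => ?_) hxτ
  have hzz := hx.2 j hj
  split_ifs at hzz ⊢ with hj_even
  all_goals
    rcases hzz.lt_or_eq with hlt | heq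
    · exact lt_of_mem_orthoscheme hxτ hlt
    · refine htie _ _ heq ?_
      simp [t, Nat.even_add_one, hj_even]
      omega

theorem volume_setOf_apply_eq_apply {ι : Type*} [Fintype ι] {a b : ι} (hab : a ≠ b) :
    volume {x : ι → ℝ | x a = x b} = 0 := by
  let φ : (ι → ℝ) →ₗ[ℝ] ℝ := (LinearMap.proj a : (ι → ℝ) →ₗ[ℝ] ℝ) - LinearMap.proj b
  have hφ : φ ≠ 0 := fun h => by
    simpa [φ, Pi.single_eq_of_ne hab.symm] using LinearMap.congr_fun h (Pi.single a 1)
  have hker : {x : ι → ℝ | x a = x b} = LinearMap.ker φ := by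
    ext x
    simp [φ, sub_eq_zero]
  rw [hker]
  exact Measure.addHaar_submodule _ _ (mt LinearMap.ker_eq_top.1 hφ)

theorem volume_orthoscheme_inter {τ τ' : Equiv.Perm (Fin m)} (hne : τ ≠ τ') :
    volume (orthoscheme τ ∩ orthoscheme τ') = 0 := by
  obtain ⟨a, b, hτ, hτ'⟩ : ∃ a b, τ a < τ b ∧ τ' b < τ' a := by
    by_contra! h
    exact hne (Equiv.Perm.eq_of_lt_imp_lt fun a b hab =>
      ((h a b hab).lt_of_ne (τ'.injective.ne (hab.ne ∘ congrArg τ)))).symm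
  refine measure_mono_null (fun x ⟨hx, hx'⟩ => ?_) (volume_setOf_apply_eq_apply (a := a) (b := b)
    (hτ.ne ∘ congrArg τ))
  exact le_antisymm (hx.2 a b hτ.le) (hx'.2 b a hτ'.le)

theorem piCongrLeft_preimage_orthoscheme_one (τ : Equiv.Perm (Fin m)) :
    MeasurableEquiv.piCongrLeft (fun _ => ℝ) τ ⁻¹' orthoscheme 1 = orthoscheme τ := by
  ext x
  simp only [mem_preimage, orthoscheme, mem_ofPred_eq, MeasurableEquiv.coe_piCongrLeft,
    Equiv.piCongrLeft_apply, eq_rec_constant, Equiv.Perm.one_apply]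
  constructor
  · rintro ⟨h01, hle⟩
    exact ⟨fun j => by simpa using h01 (τ j), fun a b hab => by simpa using hle (τ a) (τ b) hab⟩
  · rintro ⟨h01, hle⟩
    exact ⟨fun j => h01 _, fun a b hab => hle _ _ (by simpa using hab)⟩

theorem volume_orthoscheme_eq_volume_orthoscheme_one (τ : Equiv.Perm (Fin m)) :
    volume (orthoscheme τ) = volume (orthoscheme (1 : Equiv.Perm (Fin m))) := by
  rw [← piCongrLeft_preimage_orthoscheme_one τ]
  exact (volume_measurePreserving_piCongrLeft (fun _ => ℝ) τ).measure_preimage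
    (isClosed_orthoscheme 1).measurableSet.nullMeasurableSet

theorem volume_orthoscheme (τ : Equiv.Perm (Fin m)) :
    volume (orthoscheme τ) = (m.factorial : ℝ≥0∞)⁻¹ := by
  have hcube : (m.factorial : ℝ≥0∞) * volume (orthoscheme (1 : Equiv.Perm (Fin m))) = 1 := calc
    _ = ∑ σ : Equiv.Perm (Fin m), volume (orthoscheme σ) := by
      simp [volume_orthoscheme_eq_volume_orthoscheme_one, Fintype.card_perm]
    _ = ∑' σ : Equiv.Perm (Fin m), volume (orthoscheme σ) := (tsum_fintype _).symm
    _ = volume (⋃ σ : Equiv.Perm (Fin m), orthoscheme σ) :=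
      (measure_iUnion₀ (fun _ _ => volume_orthoscheme_inter)
        fun σ => (isClosed_orthoscheme σ).measurableSet.nullMeasurableSet).symm
    _ = 1 := by simp [iUnion_orthoscheme, Real.volume_Icc_pi]
  rw [volume_orthoscheme_eq_volume_orthoscheme_one]
  exact ENNReal.eq_inv_of_mul_eq_one_left (by rwa [mul_comm] at hcube)

theorem orthoscheme_volume_disjoint_union_general (m : ℕ) :
    (∀ τ : Equiv.Perm (Fin m), volume (orthoscheme τ) = ((Nat.factorial m : ℝ≥0∞))⁻¹) ∧
    (∀ τ τ' : Equiv.Perm (Fin m), τ ≠ τ' →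
      volume (orthoscheme τ ∩ orthoscheme τ') = 0) ∧
    (∀ τ : Equiv.Perm (Fin m), DownUp τ → orthoscheme τ ⊆ Ozz m) ∧
    Ozz m = ⋃ τ ∈ {τ : Equiv.Perm (Fin m) | DownUp τ}, orthoscheme τ :=
  ⟨volume_orthoscheme, fun _ _ => volume_orthoscheme_inter, fun _ => orthoscheme_subset_Ozz,
    Ozz_eq_biUnion_orthoscheme⟩

/-- (i) each orthoscheme has volume `1/m!`; (ii) distinct orthoschemes meet in
measure zero; (iii) orthoschemes of down-up alternating permutations lie in `O_m`, whose
union they form. -/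
theorem orthoscheme_volume_disjoint_union (m : ℕ) (hm : 1 ≤ m) :
    (∀ τ : Equiv.Perm (Fin m), volume (orthoscheme τ) = ((Nat.factorial m : ℝ≥0∞))⁻¹) ∧
    (∀ τ τ' : Equiv.Perm (Fin m), τ ≠ τ' →
      volume (orthoscheme τ ∩ orthoscheme τ') = 0) ∧
    (∀ τ : Equiv.Perm (Fin m), DownUp τ → orthoscheme τ ⊆ Ozz m) ∧
    Ozz m = ⋃ τ ∈ {τ : Equiv.Perm (Fin m) | DownUp τ}, orthoscheme τ :=
  orthoscheme_volume_disjoint_union_general m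
end

section
/- For every m ≥ 1, the Lebesgue volume of the zig-zag order polytope O_m equals E_m/m!, where E_m is the Euler number (the number of down-up alternating permutations of {1,…,m}). -/
open scoped Classical ENNReal

open MeasureTheory

/-!
Off the null set of points with a repeated coordinate, each `x ∈ [0,1]^m` is strictly sorted by
a unique permutation `σ`. So the cube is, up to measure zero, the disjoint union of the `m!`
congruent simplices `{x | x (σ 0) ≤ ⋯ ≤ x (σ (m-1))}`, each of volume `1/m!`. A point with
distinct coordinates lies in `O_m` exactly when `σ⁻¹`, the relative order of its coordinates, is
down-up alternating, so `O_m` is almost everywhere the union of `E_m` of these simplices.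
-/

section NullSets

variable {ι : Type*} [Fintype ι]

lemma volume_setOf_apply_eq_apply_s2 {i j : ι} (hij : i ≠ j) :
    volume {x : ι → ℝ | x i = x j} = 0 := by
  let s : Submodule ℝ (ι → ℝ) :=
    LinearMap.ker (LinearMap.proj (R := ℝ) (φ := fun _ : ι => ℝ) i - LinearMap.proj j)
  have hs : {x : ι → ℝ | x i = x j} = s := by
    ext x
    simp [s, sub_eq_zero]
  rw [hs]
  refine Measure.addHaar_submodule _ s fun htop => ?_
  have hsingle : (Pi.single i 1 : ι → ℝ) ∈ s := htop ▸ Submodule.mem_top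
  simp [s, hij.symm] at hsingle

lemma ae_injective : ∀ᵐ x : ι → ℝ, Function.Injective x := by
  simp only [Function.Injective, ae_all_iff]
  intro i j
  by_cases hij : i = j
  · exact .of_forall fun _ _ => hij
  · refine (measure_eq_zero_iff_ae_notMem.1 (volume_setOf_apply_eq_apply_s2 hij)).mono ?_
    exact fun x hx hxij => absurd hxij hx

end NullSets

section OrderSimplex

variable {m : ℕ}

def orderSimplex (σ : Equiv.Perm (Fin m)) : Set (Fin m → ℝ) :=
  (Set.univ.pi fun _ => Set.Icc 0 1) ∩ {x | Monotone (x ∘ σ)}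

lemma isClosed_orderSimplex (σ : Equiv.Perm (Fin m)) : IsClosed (orderSimplex σ) :=
  (isClosed_set_pi fun _ _ => isClosed_Icc).inter (isClosed_monotone.preimage (by fun_prop))

lemma volume_orderSimplex_eq_volume_orderSimplex_one (σ : Equiv.Perm (Fin m)) :
    volume (orderSimplex σ) = volume (orderSimplex (1 : Equiv.Perm (Fin m))) := by
  have hσ := volume_preserving_arrowCongr' σ.symm (MeasurableEquiv.refl ℝ) (.id _)
  have hpre : orderSimplex σ =
      MeasurableEquiv.arrowCongr' σ.symm (MeasurableEquiv.refl ℝ) ⁻¹' orderSimplex 1 := by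
    ext x
    have happ : MeasurableEquiv.arrowCongr' σ.symm (MeasurableEquiv.refl ℝ) x = x ∘ σ := rfl
    simp only [orderSimplex, Set.mem_preimage, happ, Set.mem_inter_iff, Set.mem_univ_pi,
      Set.mem_ofPred_eq, Function.comp_apply, Equiv.Perm.coe_one, Function.comp_id]
    exact and_congr_left' σ.forall_congr_right.symm
  rw [hpre, hσ.measure_preimage (isClosed_orderSimplex 1).measurableSet.nullMeasurableSet]

lemma exists_strictMono_comp_perm {x : Fin m → ℝ} (hx : Function.Injective x) :
    ∃ σ : Equiv.Perm (Fin m), StrictMono (x ∘ σ) :=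
  ⟨Tuple.sort x, (Tuple.monotone_sort x).strictMono_of_injective (hx.comp (Equiv.injective _))⟩

lemma aedisjoint_orderSimplex :
    Pairwise fun σ τ : Equiv.Perm (Fin m) =>
      AEDisjoint volume (orderSimplex σ) (orderSimplex τ) := by
  intro σ τ hστ
  have hsub : orderSimplex σ ∩ orderSimplex τ ⊆ {x | ¬ Function.Injective x} := fun x hx hinj =>
    hστ <| Equiv.ext fun i => hinj (congrFun (Tuple.unique_monotone hx.1.2 hx.2.2) i)
  exact measure_mono_null hsub (ae_iff.1 ae_injective)

lemma volume_iUnion_orderSimplex {ι : Type*} [Fintype ι] {f : ι → Equiv.Perm (Fin m)}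
    (hf : Function.Injective f) :
    volume (⋃ i, orderSimplex (f i)) =
      Fintype.card ι * volume (orderSimplex (1 : Equiv.Perm (Fin m))) := by
  rw [measure_iUnion₀ (aedisjoint_orderSimplex.comp_of_injective hf)
    (fun i => (isClosed_orderSimplex _).measurableSet.nullMeasurableSet), tsum_fintype]
  simp [volume_orderSimplex_eq_volume_orderSimplex_one]

lemma iUnion_orderSimplex_ae_eq :
    ⋃ σ : Equiv.Perm (Fin m), orderSimplex σ =ᵐ[volume] Set.univ.pi fun _ => Set.Icc (0 : ℝ) 1 := by
  refine (Set.iUnion_subset fun σ => Set.inter_subset_left).eventuallyLE.antisymm ?_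
  filter_upwards [ae_injective] with x hinj hx
  obtain ⟨σ, hσ⟩ := exists_strictMono_comp_perm hinj
  exact Set.mem_iUnion.2 ⟨σ, hx, hσ.monotone⟩

lemma volume_orderSimplex (σ : Equiv.Perm (Fin m)) :
    volume (orderSimplex σ) = (m.factorial : ℝ≥0∞)⁻¹ := by
  have hcube := measure_congr (iUnion_orderSimplex_ae_eq (m := m))
  rw [volume_iUnion_orderSimplex (f := fun σ => σ) Function.injective_id, volume_pi_pi] at hcube
  simp only [Real.volume_Icc, sub_zero, ENNReal.ofReal_one, Finset.prod_const_one,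
    Fintype.card_perm, Fintype.card_fin] at hcube
  rw [volume_orderSimplex_eq_volume_orderSimplex_one]
  exact ENNReal.eq_inv_of_mul_eq_one_left (by rwa [mul_comm] at hcube)

end OrderSimplex

section ZigZag

variable {m : ℕ} {α β : Type*}

/-- `DownUp τ` is `IsDownUp (· < ·) τ`, and `x ∈ Ozz m` means `x ∈ [0,1]^m ∧ IsDownUp (· ≤ ·) x`. -/
def IsDownUp (r : α → α → Prop) (f : Fin m → α) : Prop :=
  ∀ i : ℕ, ∀ h : i + 1 < m,
    if Even i then r (f ⟨i + 1, h⟩) (f ⟨i, Nat.lt_of_succ_lt h⟩)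
    else r (f ⟨i, Nat.lt_of_succ_lt h⟩) (f ⟨i + 1, h⟩)

lemma IsDownUp.imp {r : α → α → Prop} {s : β → β → Prop} {f : Fin m → α} {g : Fin m → β}
    (hf : IsDownUp r f) (hfg : ∀ a b, a ≠ b → r (f a) (f b) → s (g a) (g b)) : IsDownUp s g := by
  intro i hi
  have hne : (⟨i + 1, hi⟩ : Fin m) ≠ ⟨i, Nat.lt_of_succ_lt hi⟩ := by simp
  have hfi := hf i hi
  split_ifs at hfi ⊢
  exacts [hfg _ _ hne hfi, hfg _ _ hne.symm hfi]

lemma ozz_ae_eq_iUnion_orderSimplex :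
    Ozz m =ᵐ[volume]
      ⋃ τ : {τ : Equiv.Perm (Fin m) // DownUp τ}, orderSimplex (τ : Equiv.Perm (Fin m))⁻¹ := by
  refine Filter.EventuallyLE.antisymm ?_ (Set.iUnion_subset fun τ => ?_).eventuallyLE
  · filter_upwards [ae_injective] with x hinj ⟨hbox, hzz⟩
    obtain ⟨σ, hσ⟩ := exists_strictMono_comp_perm hinj
    have hτ : DownUp σ⁻¹ := (show IsDownUp (· ≤ ·) x from hzz).imp fun a b hab hxab => by
      rw [← hσ.lt_iff_lt]
      simpa using (hxab.lt_of_ne (hinj.ne hab))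
    exact Set.mem_iUnion.2 ⟨⟨σ⁻¹, hτ⟩, fun j _ => hbox j, by simpa using hσ.monotone⟩
  · rintro x ⟨hbox, hmono⟩
    refine ⟨fun j => hbox j trivial, (show IsDownUp (· < ·) (τ : Fin m → Fin m) from τ.2).imp ?_⟩
    intro a b _ hab
    simpa using hmono hab.le

end ZigZag

theorem volume_zigzag_order_polytope_general (m : ℕ) :
    volume (Ozz m) = (eulerNumber m : ℝ≥0∞) / (Nat.factorial m : ℝ≥0∞) := by
  rw [measure_congr ozz_ae_eq_iUnion_orderSimplex,
    volume_iUnion_orderSimplex fun _ _ h => Subtype.ext (inv_injective h), volume_orderSimplex,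
    eulerNumber, Nat.card_eq_fintype_card, div_eq_mul_inv]

/-- the Lebesgue volume of the zig-zag order polytope `O_m` is `E_m / m!`. -/
theorem volume_zigzag_order_polytope (m : ℕ) (hm : 1 ≤ m) :
    volume (Ozz m) = (eulerNumber m : ℝ≥0∞) / (Nat.factorial m : ℝ≥0∞) :=
  volume_zigzag_order_polytope_general m
end

section
/- Fix x ∈ (0,1] and define g_x : [0,1] → [0,1] by g_x(u) = 1 − (2/π)·arcsin(u·sin(πx/2)). Then the pushforward under g_x of the uniform probability measure on [0,1] is the probability measure on [0,1] whose density with respect to Lebesgue measure is f_x. -/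
open scoped Classical

open MeasureTheory

/-- The conditional density `f_x(y) = (π/2)·sin(πy/2)/sin(πx/2)` for `y ≥ 1 - x`, and `0`
otherwise. -/
noncomputable def fdens (x y : ℝ) : ℝ :=
  if 1 - x ≤ y then (Real.pi / 2) * Real.sin (Real.pi * y / 2) / Real.sin (Real.pi * x / 2)
  else 0

/-!
The survival function `h_x(y) = ∫_y^1 f_x = cos(πy/2)/sin(πx/2)` maps `[1-x, 1]` decreasingly
onto `[0, 1]`, with `|h_x'| = f_x` there, and `g_x` is its inverse. By the change of variables
formula, `h_x` pushes the measure `f_x(y) dy` on `[1-x, 1]` forward to the uniform measure on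
`[0, 1]`; applying `g_x = h_x⁻¹` to both sides gives the theorem.
-/

open Real Set

namespace MeasureTheory.Measure

variable {α β : Type*} [MeasurableSpace α] [MeasurableSpace β]

theorem map_map_of_ae_leftInverse {μ : Measure α} {f : α → β} {g : β → α}
    (hg : Measurable g) (hf : Measurable f) (hgf : ∀ᵐ a ∂μ, g (f a) = a) :
    (μ.map f).map g = μ := by
  rw [map_map hg hf]
  exact (map_congr hgf).trans map_id'

end MeasureTheory.Measure

theorem MeasureTheory.map_withDensity_abs_deriv_eq_volume_image {s : Set ℝ} {f f' : ℝ → ℝ}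
    (hs : MeasurableSet s) (hf' : ∀ x ∈ s, HasDerivWithinAt f (f' x) s x) (hf : InjOn f s) :
    ((volume.restrict s).withDensity fun x => ENNReal.ofReal |f' x|).map f =
      volume.restrict (f '' s) := by
  simpa only [ContinuousLinearMap.det_toSpanSingleton] using
    map_withDensity_abs_det_fderiv_eq_addHaar volume hs.nullMeasurableSet
      (fun x hx => (hf' x hx).hasFDerivWithinAt) hf

theorem Real.arcsin_cos {z : ℝ} (hz₀ : 0 ≤ z) (hz₁ : z ≤ π) :
    arcsin (cos z) = π / 2 - z := by
  rw [arcsin_eq_pi_div_two_sub_arccos, arccos_cos hz₀ hz₁]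

/-- The survival function `y ↦ ∫_y^1 fdens x` of the density `fdens x`. -/
noncomputable def fdensSurvival (x y : ℝ) : ℝ := cos (π * y / 2) / sin (π * x / 2)

noncomputable def fdensSurvivalInv (x u : ℝ) : ℝ := 1 - (2 / π) * arcsin (u * sin (π * x / 2))

theorem continuous_fdensSurvival (x : ℝ) : Continuous (fdensSurvival x) := by
  unfold fdensSurvival; fun_prop

theorem continuous_fdensSurvivalInv (x : ℝ) : Continuous (fdensSurvivalInv x) := by
  unfold fdensSurvivalInv; fun_prop

theorem hasDerivAt_fdensSurvival (x y : ℝ) :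
    HasDerivAt (fdensSurvival x) (-(π / 2 * sin (π * y / 2) / sin (π * x / 2))) y :=
  ((((hasDerivAt_id' y).const_mul π).div_const 2).cos.div_const _).congr_deriv (by ring)

theorem sin_pi_mul_div_two_pos {x : ℝ} (hx₀ : 0 < x) (hx₂ : x < 2) :
    0 < sin (π * x / 2) := by
  apply sin_pos_of_pos_of_lt_pi <;> nlinarith [pi_pos]

section

variable {x : ℝ}

theorem mapsTo_fdensSurvivalInv (hx₀ : 0 < x) (hx₁ : x ≤ 1) :
    MapsTo (fdensSurvivalInv x) (Icc 0 1) (Icc (1 - x) 1) := by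
  rintro u ⟨hu₀, hu₁⟩
  have hs := sin_pi_mul_div_two_pos hx₀ (by linarith)
  have hlow : 0 ≤ arcsin (u * sin (π * x / 2)) := arcsin_nonneg.2 (by positivity)
  have hup : arcsin (u * sin (π * x / 2)) ≤ π * x / 2 :=
    calc arcsin (u * sin (π * x / 2)) ≤ arcsin (sin (π * x / 2)) :=
          monotone_arcsin (mul_le_of_le_one_left hs.le hu₁)
      _ = π * x / 2 := arcsin_sin (by nlinarith [pi_pos]) (by nlinarith [pi_pos])
  have hx : 2 / π * arcsin (u * sin (π * x / 2)) ≤ x := by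
    rw [div_mul_eq_mul_div, div_le_iff₀ pi_pos]
    linarith
  constructor <;> unfold fdensSurvivalInv <;> nlinarith [pi_pos, div_pos two_pos pi_pos]

theorem mapsTo_fdensSurvival (hx₀ : 0 < x) (hx₁ : x ≤ 1) :
    MapsTo (fdensSurvival x) (Icc (1 - x) 1) (Icc 0 1) := by
  rintro y ⟨hy₀, hy₁⟩
  have hs := sin_pi_mul_div_two_pos hx₀ (by linarith)
  have hlow : 0 ≤ cos (π * y / 2) :=
    cos_nonneg_of_mem_Icc ⟨by nlinarith [pi_pos], by nlinarith [pi_pos]⟩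
  have hup : cos (π * y / 2) ≤ sin (π * x / 2) :=
    calc cos (π * y / 2) ≤ cos (π * (1 - x) / 2) :=
          cos_le_cos_of_nonneg_of_le_pi (by nlinarith [pi_pos]) (by nlinarith [pi_pos])
            (by nlinarith [pi_pos])
      _ = sin (π * x / 2) := by rw [← cos_pi_div_two_sub]; ring_nf
  exact ⟨div_nonneg hlow hs.le, (div_le_one hs).2 hup⟩

theorem leftInvOn_fdensSurvival_fdensSurvivalInv (hx₀ : 0 < x) (hx₁ : x ≤ 1) :
    LeftInvOn (fdensSurvival x) (fdensSurvivalInv x) (Icc 0 1) := by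
  rintro u ⟨hu₀, hu₁⟩
  have hs := sin_pi_mul_div_two_pos hx₀ (by linarith)
  have hangle : π * fdensSurvivalInv x u / 2 = π / 2 - arcsin (u * sin (π * x / 2)) := by
    unfold fdensSurvivalInv
    field_simp
  rw [fdensSurvival, hangle, cos_pi_div_two_sub,
    sin_arcsin (by nlinarith) (by nlinarith [sin_le_one (π * x / 2)]),
    mul_div_cancel_right₀ _ hs.ne']

theorem leftInvOn_fdensSurvivalInv_fdensSurvival (hx₀ : 0 < x) (hx₁ : x ≤ 1) :
    LeftInvOn (fdensSurvivalInv x) (fdensSurvival x) (Icc (1 - x) 1) := by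
  rintro y ⟨hy₀, hy₁⟩
  have hs := sin_pi_mul_div_two_pos hx₀ (by linarith)
  rw [fdensSurvivalInv, fdensSurvival, div_mul_cancel₀ _ hs.ne',
    arcsin_cos (by nlinarith [pi_pos]) (by nlinarith [pi_pos])]
  field_simp
  ring

theorem image_fdensSurvival (hx₀ : 0 < x) (hx₁ : x ≤ 1) :
    fdensSurvival x '' Icc (1 - x) 1 = Icc 0 1 :=
  SurjOn.image_eq_of_mapsTo
    (LeftInvOn.surjOn (leftInvOn_fdensSurvival_fdensSurvivalInv hx₀ hx₁)
      (mapsTo_fdensSurvivalInv hx₀ hx₁))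
    (mapsTo_fdensSurvival hx₀ hx₁)

theorem withDensity_fdens (hx₁ : x ≤ 1) :
    (volume.restrict (Icc 0 1)).withDensity (fun y => ENNReal.ofReal (fdens x y)) =
      (volume.restrict (Icc (1 - x) 1)).withDensity (fun y => ENNReal.ofReal (fdens x y)) := by
  have hind : (fun y => ENNReal.ofReal (fdens x y)) =
      (Ici (1 - x)).indicator (fun y => ENNReal.ofReal (fdens x y)) := by
    ext y
    unfold fdens
    by_cases hy : 1 - x ≤ y <;>
      simp only [indicator_apply, mem_Ici, hy, if_true, if_false, ENNReal.ofReal_zero]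
  have hinter : Ici (1 - x) ∩ Icc 0 1 = Icc (1 - x) 1 := by
    ext y
    simp only [mem_inter_iff, mem_Ici, mem_Icc]
    constructor
    · rintro ⟨hy, -, hy₁⟩
      exact ⟨hy, hy₁⟩
    · rintro ⟨hy, hy₁⟩
      exact ⟨hy, by linarith, hy₁⟩
  conv_lhs => rw [hind, withDensity_indicator measurableSet_Ici,
    Measure.restrict_restrict measurableSet_Ici, hinter]

theorem map_fdensSurvival_withDensity_fdens (hx₀ : 0 < x) (hx₁ : x ≤ 1) :
    ((volume.restrict (Icc (1 - x) 1)).withDensity fun y => ENNReal.ofReal (fdens x y)).map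
      (fdensSurvival x) = volume.restrict (Icc 0 1) := by
  have hs := sin_pi_mul_div_two_pos hx₀ (by linarith)
  rw [← image_fdensSurvival hx₀ hx₁,
    ← map_withDensity_abs_deriv_eq_volume_image measurableSet_Icc
      (fun y _ => (hasDerivAt_fdensSurvival x y).hasDerivWithinAt)
      (leftInvOn_fdensSurvivalInv_fdensSurvival hx₀ hx₁).injOn]
  congr 1
  refine withDensity_congr_ae ?_
  filter_upwards [ae_restrict_mem measurableSet_Icc] with y ⟨hy₀, hy₁⟩
  have hsy : 0 ≤ sin (π * y / 2) :=
    sin_nonneg_of_nonneg_of_le_pi (by nlinarith [pi_pos]) (by nlinarith [pi_pos])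
  rw [abs_neg, abs_of_nonneg (div_nonneg (mul_nonneg (by positivity) hsy) hs.le), fdens,
    if_pos hy₀]

end

/-- for `x ∈ (0,1]`, the pushforward under
`g_x(u) = 1 - (2/π)·arcsin(u·sin(πx/2))` of the uniform probability measure on `[0,1]` is
the probability measure on `[0,1]` with density `f_x` with respect to Lebesgue measure. -/
theorem pushforward_uniform_eq_fdens (x : ℝ) (hx : x ∈ Set.Ioc (0 : ℝ) 1) :
    Measure.map (fun u : ℝ => 1 - (2 / Real.pi) * Real.arcsin (u * Real.sin (Real.pi * x / 2)))
        (volume.restrict (Set.Icc (0 : ℝ) 1)) =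
      (volume.restrict (Set.Icc (0 : ℝ) 1)).withDensity
        (fun y => ENNReal.ofReal (fdens x y)) := by
  obtain ⟨hx₀, hx₁⟩ := hx
  change (volume.restrict (Icc 0 1)).map (fdensSurvivalInv x) = _
  rw [withDensity_fdens hx₁, ← map_fdensSurvival_withDensity_fdens hx₀ hx₁]
  have hinv : ∀ y ∈ Icc (1 - x) 1, fdensSurvivalInv x (fdensSurvival x y) = y :=
    leftInvOn_fdensSurvivalInv_fdensSurvival hx₀ hx₁
  exact Measure.map_map_of_ae_leftInverse (continuous_fdensSurvivalInv x).measurable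
    (continuous_fdensSurvival x).measurable
    ((withDensity_absolutelyContinuous _ _).ae_le
      (ae_restrict_of_forall_mem measurableSet_Icc hinv))
end

section
/- The measure μ on [0,1] with density y ↦ 1 − cos(πy) is invariant for the Markov kernel with conditional density f_x: for every Borel set A ⊆ [0,1], ∫_0^1 (∫_A f_x(y) dy)·(1 − cos(πx)) dx = ∫_A (1 − cos(πy)) dy. (Here the inner integrand at x = 0 may be defined arbitrarily since the factor 1 − cos(πx) vanishes there.) -/
open scoped Classical

open MeasureTheory

/-!
Multiplying `f_x(y)` by `1 - cos(πx) = 2 sin²(πx/2)` cancels the denominator and leaves the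
bounded joint density `π sin(πx/2) sin(πy/2) 1_{x + y ≥ 1}`. By Fubini the left-hand side is
then the integral over `A` of its `x`-marginal, and for `y ∈ [0,1]` this marginal is
`π sin(πy/2) ∫_{1-y}^1 sin(πx/2) dx = 2 sin²(πy/2) = 1 - cos(πy)`.
-/

open Real Set

noncomputable def jointDensity (x y : ℝ) : ℝ :=
  if 1 - x ≤ y then π * sin (π * x / 2) * sin (π * y / 2) else 0

lemma one_sub_cos_pi_mul (x : ℝ) : 1 - cos (π * x) = 2 * sin (π * x / 2) ^ 2 := by
  have h := cos_two_mul (π * x / 2)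
  rw [show 2 * (π * x / 2) = π * x by ring, cos_sq'] at h
  linarith

lemma fdens_mul_one_sub_cos (x y : ℝ) :
    fdens x y * (1 - cos (π * x)) = jointDensity x y := by
  unfold fdens jointDensity
  split_ifs
  · rw [one_sub_cos_pi_mul]
    rcases eq_or_ne (sin (π * x / 2)) 0 with hs | hs
    · simp [hs]
    · field_simp
  · rw [zero_mul]

lemma measurable_jointDensity : Measurable (Function.uncurry jointDensity) :=
  Measurable.ite (measurableSet_le (by fun_prop) (by fun_prop)) (by fun_prop) (by fun_prop)

lemma abs_jointDensity_le (x y : ℝ) : |jointDensity x y| ≤ π := by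
  unfold jointDensity
  split_ifs
  · rw [abs_mul, abs_mul, abs_of_pos pi_pos, mul_assoc]
    exact mul_le_of_le_one_right pi_pos.le
      (mul_le_one₀ (abs_sin_le_one _) (abs_nonneg _) (abs_sin_le_one _))
  · simp [pi_pos.le]

lemma integrable_jointDensity {μ ν : Measure ℝ} [IsFiniteMeasure μ] [IsFiniteMeasure ν] :
    Integrable (Function.uncurry jointDensity) (μ.prod ν) :=
  Integrable.of_bound measurable_jointDensity.aestronglyMeasurable π
    (ae_of_all _ fun p => abs_jointDensity_le p.1 p.2)

lemma integral_sin_pi_mul_div_two (y : ℝ) :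
    ∫ x in (1 - y)..1, sin (π * x / 2) = 2 / π * sin (π * y / 2) := by
  have hπ : π / 2 ≠ 0 := by positivity
  simp_rw [show ∀ x, π * x / 2 = π / 2 * x from fun x => by ring]
  rw [intervalIntegral.integral_comp_mul_left (fun x => sin x) hπ, integral_sin,
    mul_one_sub, cos_pi_div_two_sub, mul_one, cos_pi_div_two, sub_zero, smul_eq_mul]
  field_simp

lemma integral_jointDensity_left {y : ℝ} (hy : y ∈ Icc (0 : ℝ) 1) :
    ∫ x in Icc (0 : ℝ) 1, jointDensity x y = 1 - cos (π * y) := by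
  have h_indicator : (jointDensity · y) =
      (Ici (1 - y)).indicator (fun x => π * sin (π * y / 2) * sin (π * x / 2)) := by
    ext x
    simp only [jointDensity, indicator, mem_Ici, sub_le_comm (b := y)]
    split_ifs <;> ring
  have h_inter : Icc (0 : ℝ) 1 ∩ Ici (1 - y) = Icc (1 - y) 1 := by
    ext x
    simp only [mem_inter_iff, mem_Icc, mem_Ici]
    constructor
    · rintro ⟨⟨-, hx1⟩, hx⟩
      exact ⟨hx, hx1⟩
    · rintro ⟨hx, hx1⟩
      exact ⟨⟨by linarith [hy.2], hx1⟩, hx⟩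
  rw [h_indicator, setIntegral_indicator measurableSet_Ici, h_inter,
    integral_Icc_eq_integral_Ioc, ← intervalIntegral.integral_of_le (by linarith [hy.1]),
    intervalIntegral.integral_const_mul, integral_sin_pi_mul_div_two, one_sub_cos_pi_mul]
  field_simp

theorem stationary_measure_invariant_general (A : Set ℝ)
    (hA' : A ⊆ Set.Icc (0 : ℝ) 1) :
    (∫ x in Set.Icc (0 : ℝ) 1, (∫ y in A, fdens x y) * (1 - Real.cos (Real.pi * x))) =
      ∫ y in A, (1 - Real.cos (Real.pi * y)) := by
  have : IsFiniteMeasure (volume.restrict A) :=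
    isFiniteMeasure_restrict.2 ((measure_mono hA').trans_lt measure_Icc_lt_top).ne
  simp_rw [← integral_mul_const, fdens_mul_one_sub_cos]
  rw [integral_integral_swap integrable_jointDensity]
  exact integral_congr_ae <| ae_restrict_of_ae_restrict_of_subset hA' <|
    ae_restrict_of_forall_mem measurableSet_Icc fun y hy => integral_jointDensity_left hy

/-- the measure with density `y ↦ 1 - cos(πy)` on `[0,1]` is invariant for the
Markov kernel with conditional density `f_x`: for every Borel set `A ⊆ [0,1]`,
`∫_0^1 (∫_A f_x(y) dy)·(1 - cos(πx)) dx = ∫_A (1 - cos(πy)) dy`. -/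
theorem stationary_measure_invariant (A : Set ℝ) (hA : MeasurableSet A)
    (hA' : A ⊆ Set.Icc (0 : ℝ) 1) :
    (∫ x in Set.Icc (0 : ℝ) 1, (∫ y in A, fdens x y) * (1 - Real.cos (Real.pi * x))) =
      ∫ y in A, (1 - Real.cos (Real.pi * y)) :=
  stationary_measure_invariant_general A hA'
end

section
/- For all n ≥ 1, ∑_{k=1}^{n} (k+1)·E_{n,k} = E_{n+2}, where E_{n,k} are the Entringer numbers and E_{n+2} is the Euler number (the number of down-up alternating permutations of {1,…,n+2}). -/
open scoped Classical

/-- The Entringer number `E_{n,k}`: the number of down-up alternating permutations `τ` of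
`{1,…,n+1}` with `τ(1) = k+1` (0-indexed: `τ 0 = k`); it vanishes for `k < 0`. -/
noncomputable def entringer (n : ℕ) (k : ℤ) : ℕ :=
  Nat.card {τ : Equiv.Perm (Fin (n + 1)) // DownUp τ ∧ ((τ ⟨0, Nat.succ_pos n⟩ : ℕ) : ℤ) = k}

/-!
A down-up permutation `σ` of `{0,…,n+1}` is determined by its first value `a` and the
standardisation `ρ` of its remaining values, and `σ` is down-up exactly when `ρ` is up-down
with `ρ 0 < a`; so `E_{n+2} = ∑_{ρ up-down} (n + 1 - ρ 0)`. Complementing the values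
(`ρ ↦ n - ρ`) turns up-down into down-up permutations and `n + 1 - ρ 0` into `τ 0 + 1`, whence
`E_{n+2} = ∑_k (k + 1) E_{n,k}`, and the term `k = 0` vanishes for `n ≥ 1`.
-/

open Finset Equiv

/-- The permutation with first value `a` whose later values are in the same relative order as
the values of `ρ`. -/
def permCons {m : ℕ} (a : Fin (m + 1)) (ρ : Perm (Fin m)) : Perm (Fin (m + 1)) :=
  (finSuccEquiv' 0).trans ((optionCongr ρ).trans (finSuccEquiv' a).symm)

@[simp]
lemma permCons_zero {m : ℕ} (a : Fin (m + 1)) (ρ : Perm (Fin m)) : permCons a ρ 0 = a := by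
  simp [permCons]

@[simp]
lemma permCons_succ {m : ℕ} (a : Fin (m + 1)) (ρ : Perm (Fin m)) (j : Fin m) :
    permCons a ρ j.succ = a.succAbove (ρ j) := by
  have : finSuccEquiv' 0 j.succ = some j := by
    rw [← Fin.zero_succAbove j, finSuccEquiv'_succAbove]
  simp [permCons, this]

lemma permCons_bijective (m : ℕ) :
    Function.Bijective (fun p : Fin (m + 1) × Perm (Fin m) => permCons p.1 p.2) := by
  refine (Fintype.bijective_iff_injective_and_card _).2 ⟨?_, ?_⟩
  · rintro ⟨a, ρ⟩ ⟨b, π⟩ h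
    have hab : a = b := by simpa using congr($h 0)
    subst hab
    obtain rfl : ρ = π := Equiv.ext fun j => by simpa using congr($h j.succ)
    rfl
  · simp [Fintype.card_perm, Nat.factorial_succ]

lemma downUp_permCons_iff {n : ℕ} (a : Fin (n + 2)) (ρ : Perm (Fin (n + 1))) :
    DownUp (permCons a ρ) ↔ (ρ 0).castSucc < a ∧ UpDown ρ := by
  have head : permCons a ρ 1 < permCons a ρ 0 ↔ (ρ 0).castSucc < a := by
    rw [← Fin.succ_zero_eq_one, permCons_succ, permCons_zero, Fin.succAbove_lt_iff_castSucc_lt]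
  have tail : ∀ j (hj : j + 1 < n + 1),
      let i : Fin (n + 1) := ⟨j, by omega⟩
      let i' : Fin (n + 1) := ⟨j + 1, hj⟩
      ((if Even (j + 1) then permCons a ρ i'.succ < permCons a ρ i.succ
        else permCons a ρ i.succ < permCons a ρ i'.succ) ↔
      if Even j then ρ i < ρ i' else ρ i' < ρ i) := by
    intro j hj
    simp only [permCons_succ, Fin.succAbove_lt_succAbove_iff, Nat.even_add_one]
    split_ifs <;> rfl
  constructor
  · intro h
    exact ⟨head.1 (by simpa using h 0 (by omega)),
      fun j hj => (tail j hj).1 (h (j + 1) (by omega))⟩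
  · rintro ⟨h0, h⟩ (_ | j) hj
    · simpa using head.2 h0
    · exact (tail j (by omega)).2 (h j (by omega))

lemma downUp_revPerm_mul_iff {m : ℕ} (ρ : Perm (Fin m)) :
    DownUp (Fin.revPerm * ρ) ↔ UpDown ρ := by
  refine forall_congr' fun i => forall_congr' fun h => ?_
  simp only [Perm.mul_apply, Fin.revPerm_apply]
  split <;> exact Fin.rev_lt_rev

lemma eulerNumber_eq_card (m : ℕ) : eulerNumber m = #{σ : Perm (Fin m) | DownUp σ} := by
  rw [eulerNumber, Nat.card_eq_fintype_card, Fintype.card_subtype]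

lemma entringer_eq_card (n k : ℕ) :
    entringer n k = #{τ : Perm (Fin (n + 1)) | DownUp τ ∧ (τ 0 : ℕ) = k} := by
  rw [entringer, Nat.card_eq_fintype_card, Fintype.card_subtype]
  simp only [Nat.cast_inj]
  rfl

lemma entringer_succ_zero (n : ℕ) : entringer (n + 1) 0 = 0 := by
  rw [← Nat.cast_zero, entringer_eq_card, card_eq_zero, filter_eq_empty_iff]
  rintro τ - ⟨h, h0⟩
  have h1 := h 0 (by omega)
  simp only [Even.zero, if_true, Fin.lt_def] at h1
  exact absurd h0 (by simp at h1 ⊢; omega)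

lemma card_castSucc_lt {n : ℕ} (i : Fin (n + 1)) :
    #{a : Fin (n + 2) | i.castSucc < a} = n + 1 - i := by
  rw [filter_lt_eq_Ioi, Fin.card_Ioi, Fin.val_castSucc, Nat.add_sub_cancel]

lemma eulerNumber_add_two (n : ℕ) :
    eulerNumber (n + 2) = ∑ ρ : Perm (Fin (n + 1)) with UpDown ρ, (n + 1 - ρ 0) := by
  let cons := Equiv.ofBijective _ (permCons_bijective (n + 1))
  calc eulerNumber (n + 2)
      = #{p : Fin (n + 2) × Perm (Fin (n + 1)) | (p.2 0).castSucc < p.1 ∧ UpDown p.2} := by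
        rw [eulerNumber_eq_card]
        exact (card_equiv cons fun p => by simp [cons, downUp_permCons_iff]).symm
    _ = ∑ ρ : Perm (Fin (n + 1)) with UpDown ρ, #{a : Fin (n + 2) | (ρ 0).castSucc < a} := by
        rw [card_filter, Fintype.sum_prod_type_right, sum_filter]
        refine sum_congr rfl fun ρ _ => ?_
        split_ifs with h <;>
          simp only [h, and_true, and_false, if_false, sum_const_zero, card_filter]
    _ = ∑ ρ : Perm (Fin (n + 1)) with UpDown ρ, (n + 1 - ρ 0) := by
        simp only [card_castSucc_lt]

lemma sum_upDown_eq_sum_downUp (n : ℕ) :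
    ∑ ρ : Perm (Fin (n + 1)) with UpDown ρ, (n + 1 - ρ 0) =
      ∑ τ : Perm (Fin (n + 1)) with DownUp τ, ((τ 0 : ℕ) + 1) := by
  refine sum_equiv (Equiv.mulLeft Fin.revPerm) (fun ρ => by simp [downUp_revPerm_mul_iff])
    fun ρ _ => ?_
  simp only [Equiv.coe_mulLeft, Perm.mul_apply, Fin.revPerm_apply, Fin.val_rev]
  omega

lemma sum_downUp_eq_sum_entringer (n : ℕ) :
    ∑ τ : Perm (Fin (n + 1)) with DownUp τ, ((τ 0 : ℕ) + 1) =
      ∑ k ∈ range (n + 1), (k + 1) * entringer n k := by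
  rw [← sum_fiberwise_of_maps_to (g := fun τ => (τ 0 : ℕ)) (t := range (n + 1))
    (fun τ _ => mem_range.2 (τ 0).isLt)]
  refine sum_congr rfl fun k _ => ?_
  rw [entringer_eq_card, filter_filter, mul_comm, ← smul_eq_mul, ← sum_const]
  exact sum_congr rfl fun τ hτ => by rw [(mem_filter.1 hτ).2.2]

/-- for all `n ≥ 1`, `∑_{k=1}^n (k+1)·E_{n,k} = E_{n+2}`. -/
theorem entringer_weighted_sum (n : ℕ) (hn : 1 ≤ n) :
    ∑ k ∈ Finset.Icc 1 n, (k + 1) * entringer n (k : ℤ) = eulerNumber (n + 2) := by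
  obtain ⟨n, rfl⟩ := Nat.exists_eq_add_of_le' hn
  rw [eulerNumber_add_two, sum_upDown_eq_sum_downUp, sum_downUp_eq_sum_entringer,
    range_eq_Ico, sum_eq_sum_Ico_succ_bot (by omega : 0 < n + 1 + 1), Ico_add_one_right_eq_Icc]
  simp [entringer_succ_zero]
end

section
/- For all 1 ≤ i ≤ n, ∑_{k=1}^{n} k·Ê_{n−1, k−1}(i) = e(Z_{n,i}), where Ê_{n−1,k−1}(i) are the generalized Entringer numbers and e(Z_{n,i}) is the number of linear extensions of the augmented zigzag poset Z_{n,i}. -/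
open scoped Classical

/-- The generating (cover) relations of the augmented zigzag poset `Z_{n,i}` on `{0,…,n}`:
`0 ⪯ i`; for `1 ≤ j < i`, `j ⪯ j+1` iff `i - j` is odd; for `i ≤ j < n`, `j ⪯ j+1` iff
`j - i` is odd. -/
def ZRel (n i : ℕ) (x y : ℕ) : Prop :=
  (x = 0 ∧ y = i) ∨
  (y = x + 1 ∧ 1 ≤ x ∧ x < i ∧ Odd (i - x)) ∨
  (y = x + 1 ∧ i ≤ x ∧ x < n ∧ Odd (x - i)) ∨
  (x = y + 1 ∧ 1 ≤ y ∧ y < i ∧ Even (i - y)) ∨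
  (x = y + 1 ∧ i ≤ y ∧ y < n ∧ Even (y - i))

/-- A linear extension of `Z_{n,i}`: a bijection `σ : {0,…,n} → {0,…,n}` with `σ(a) < σ(b)`
whenever `a ≺ b` in `Z_{n,i}` (equivalently, on the generating relations). -/
def IsLinExtZ (n i : ℕ) (σ : Equiv.Perm (Fin (n + 1))) : Prop :=
  ∀ a b : Fin (n + 1), ZRel n i (a : ℕ) (b : ℕ) → σ a < σ b

/-- `e(Z_{n,i})`, the number of linear extensions of the augmented zigzag poset. -/
noncomputable def eZ (n i : ℕ) : ℕ :=
  Nat.card {σ : Equiv.Perm (Fin (n + 1)) // IsLinExtZ n i σ}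

/-- The generalized Entringer number `Ê_{n,k}(i)`: for `1 ≤ i ≤ n+1`, the number of down-up
(if `i` odd) resp. up-down (if `i` even) alternating permutations `τ` of `{1,…,n+1}` with
`τ(i) = k+1`. -/
noncomputable def gentringer (n k i : ℕ) : ℕ :=
  if h : 1 ≤ i ∧ i ≤ n + 1 then
    if Odd i then
      Nat.card {τ : Equiv.Perm (Fin (n + 1)) // DownUp τ ∧ (τ ⟨i - 1, by omega⟩ : ℕ) = k}
    else
      Nat.card {τ : Equiv.Perm (Fin (n + 1)) // UpDown τ ∧ (τ ⟨i - 1, by omega⟩ : ℕ) = k}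
  else 0

/-!
Removing the bottom element `0` of `Z_{n,i}` leaves a zigzag on `{1, …, n}` whose linear
extensions are the alternating permutations counted by `Ê_{n-1,·}(i)`. So a linear extension `σ`
of `Z_{n,i}` amounts to the value `s = σ(0)` together with the standardization `τ` of `σ` on
`{1, …, n}`, i.e. `σ(j + 1) = s.succAbove (τ j)`, and the remaining relation `0 ≺ i` says exactly
`s ≤ τ(i)`. An alternating `τ` with `τ(i) = k - 1` (0-indexed values) thus extends in `k` ways.
-/

open Finset

/-- The alternation pattern of `Z_{n,i}` on `{1, …, n}`, with positions shifted to start at `0`. -/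
def IsZigzag (i : ℕ) {m : ℕ} (τ : Equiv.Perm (Fin m)) : Prop :=
  ∀ j : ℕ, ∀ h : j + 1 < m, τ ⟨j, Nat.lt_of_succ_lt h⟩ < τ ⟨j + 1, h⟩ ↔ Even (j + i)

lemma Equiv.Perm.apply_lt_apply_succ_iff_not_lt {m : ℕ} (τ : Equiv.Perm (Fin m)) (j : ℕ)
    (h : j + 1 < m) :
    τ ⟨j, Nat.lt_of_succ_lt h⟩ < τ ⟨j + 1, h⟩ ↔ ¬ τ ⟨j + 1, h⟩ < τ ⟨j, Nat.lt_of_succ_lt h⟩ :=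
  (not_lt.trans (Ne.le_iff_lt (by simp [Fin.ext_iff]))).symm

lemma isZigzag_iff_downUp {i m : ℕ} (hi : Odd i) (τ : Equiv.Perm (Fin m)) :
    IsZigzag i τ ↔ DownUp τ := by
  refine forall₂_congr fun j h => ?_
  rw [τ.apply_lt_apply_succ_iff_not_lt]
  split_ifs with hj <;> simp [Nat.even_add, hj, Nat.not_even_iff_odd.mpr hi]

lemma isZigzag_iff_upDown {i m : ℕ} (hi : Even i) (τ : Equiv.Perm (Fin m)) :
    IsZigzag i τ ↔ UpDown τ := by
  refine forall₂_congr fun j h => ?_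
  split_ifs with hj
  · simp [Nat.even_add, hj, hi]
  · rw [τ.apply_lt_apply_succ_iff_not_lt]
    simp [Nat.even_add, hj, hi]

lemma gentringer_eq_card_isZigzag {m i : ℕ} (hi1 : 1 ≤ i) (hin : i ≤ m + 1) (k : ℕ) :
    gentringer m k i =
      Nat.card {τ : Equiv.Perm (Fin (m + 1)) // IsZigzag i τ ∧ (τ ⟨i - 1, by omega⟩ : ℕ) = k} := by
  rw [gentringer, dif_pos ⟨hi1, hin⟩]
  split_ifs with hi
  · simp only [isZigzag_iff_downUp hi]
  · simp only [isZigzag_iff_upDown (Nat.not_odd_iff_even.mp hi)]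

namespace Fin

def consPerm {m : ℕ} (q : Fin (m + 2) × Equiv.Perm (Fin (m + 1))) : Equiv.Perm (Fin (m + 2)) :=
  (finSuccEquiv (m + 1)).trans ((Equiv.optionCongr q.2).trans (finSuccEquiv' q.1).symm)

@[simp]
lemma consPerm_zero {m : ℕ} (s : Fin (m + 2)) (τ : Equiv.Perm (Fin (m + 1))) :
    consPerm (s, τ) 0 = s := by
  simp [consPerm]

@[simp]
lemma consPerm_succ {m : ℕ} (s : Fin (m + 2)) (τ : Equiv.Perm (Fin (m + 1))) (j : Fin (m + 1)) :
    consPerm (s, τ) j.succ = s.succAbove (τ j) := by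
  simp [consPerm]

lemma consPerm_injective {m : ℕ} : Function.Injective (consPerm (m := m)) := by
  rintro ⟨s, τ⟩ ⟨s', τ'⟩ h
  obtain rfl : s = s' := by simpa using congr($h 0)
  congr
  ext1 j
  simpa using congr($h j.succ)

lemma consPerm_bijective {m : ℕ} : Function.Bijective (consPerm (m := m)) := by
  refine (Fintype.bijective_iff_injective_and_card _).mpr ⟨consPerm_injective, ?_⟩
  simp [Fintype.card_perm, Nat.factorial_succ]

end Fin

lemma zRel_iff {n i x y : ℕ} (hi1 : 1 ≤ i) (hin : i ≤ n) :
    ZRel n i x y ↔ (x = 0 ∧ y = i) ∨ (1 ≤ x ∧ x < n ∧ y = x + 1 ∧ Odd (x + i)) ∨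
      (1 ≤ y ∧ y < n ∧ x = y + 1 ∧ Even (y + i)) := by
  simp only [ZRel, Nat.odd_iff, Nat.even_iff]
  omega

open Fin in
lemma isLinExtZ_consPerm_iff {m i : ℕ} (hi1 : 1 ≤ i) (hin : i ≤ m + 1) (s : Fin (m + 2))
    (τ : Equiv.Perm (Fin (m + 1))) :
    IsLinExtZ (m + 1) i (consPerm (s, τ)) ↔
      IsZigzag i τ ∧ s ≤ castSucc (τ ⟨i - 1, by omega⟩) := by
  set σ := consPerm (s, τ)
  have hpair : ∀ x y (hx : x < m + 1) (hy : y < m + 1),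
      σ ⟨x + 1, by omega⟩ < σ ⟨y + 1, by omega⟩ ↔ τ ⟨x, hx⟩ < τ ⟨y, hy⟩ := fun x y hx hy =>
    (consPerm_succ s τ ⟨x, hx⟩).symm ▸ (consPerm_succ s τ ⟨y, hy⟩).symm ▸
      succAbove_lt_succAbove_iff
  have hzero : σ 0 < σ ⟨i, by omega⟩ ↔ s ≤ castSucc (τ ⟨i - 1, by omega⟩) := by
    obtain ⟨p, rfl⟩ : ∃ p, i = p + 1 := ⟨i - 1, by omega⟩
    exact (consPerm_succ s τ ⟨p, by omega⟩).symm ▸ (consPerm_zero s τ).symm ▸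
      lt_succAbove_iff_le_castSucc s _
  have hodd : ∀ j, Odd (j + 1 + i) ↔ Even (j + i) := fun j => by
    rw [add_right_comm, Nat.odd_add_one, Nat.not_odd_iff_even]
  have heven : ∀ j, Even (j + 1 + i) ↔ ¬ Even (j + i) := fun j => by
    rw [add_right_comm, Nat.even_add_one]
  simp only [IsLinExtZ, Fin.forall_iff, zRel_iff hi1 hin]
  constructor
  · intro H
    refine ⟨fun j h => ⟨fun hlt => ?_, fun hj => ?_⟩, hzero.mp (H 0 _ i _ (Or.inl ⟨rfl, rfl⟩))⟩
    · by_contra hj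
      refine lt_asymm hlt ((hpair (j + 1) j h (by omega)).mp (H (j + 2) _ (j + 1) _ ?_))
      exact Or.inr (Or.inr ⟨by omega, by omega, rfl, (heven j).mpr hj⟩)
    · refine (hpair j (j + 1) (by omega) h).mp (H (j + 1) _ (j + 2) _ ?_)
      exact Or.inr (Or.inl ⟨by omega, by omega, rfl, (hodd j).mpr hj⟩)
  · rintro ⟨hZ, hs⟩ a ha b hb (⟨rfl, rfl⟩ | ⟨h1, h2, rfl, hab⟩ | ⟨h1, h2, rfl, hab⟩)
    · exact hzero.mpr hs
    · obtain ⟨j, rfl⟩ : ∃ j, a = j + 1 := ⟨a - 1, by omega⟩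
      exact (hpair j (j + 1) (by omega) (by omega)).mpr ((hZ j _).mpr ((hodd j).mp hab))
    · obtain ⟨j, rfl⟩ : ∃ j, b = j + 1 := ⟨b - 1, by omega⟩
      refine (hpair (j + 1) j (by omega) (by omega)).mpr ?_
      have hdesc := (hZ j (by omega)).not.mpr ((heven j).mp hab)
      rwa [τ.apply_lt_apply_succ_iff_not_lt, not_not] at hdesc

lemma Nat.card_subtype_prod_mem {α β : Type*} [Fintype α] [Fintype β] (P : β → Prop)
    (T : β → Finset α) :
    Nat.card {q : α × β // P q.2 ∧ q.1 ∈ T q.2} = ∑ b with P b, #(T b) := by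
  rw [Nat.card_eq_fintype_card, Fintype.card_subtype, card_filter, Fintype.sum_prod_type_right,
    sum_filter]
  refine sum_congr rfl fun b _ => ?_
  split_ifs with hb <;> simp [hb]

lemma Finset.sum_add_one_eq_sum_mul_card_fiber {ι : Type*} (S : Finset ι) (f : ι → ℕ) (N : ℕ)
    (hf : ∀ a ∈ S, f a < N) :
    ∑ a ∈ S, (f a + 1) = ∑ k ∈ Icc 1 N, k * #{a ∈ S | f a = k - 1} := by
  rw [← sum_fiberwise_of_maps_to (g := fun a => f a + 1) (t := Icc 1 N)
    fun a ha => mem_Icc.mpr ⟨by omega, hf a ha⟩]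
  refine sum_congr rfl fun k hk => ?_
  rw [sum_congr rfl fun a ha => (mem_filter.mp ha).2, sum_const, smul_eq_mul, mul_comm]
  have hk1 := (mem_Icc.mp hk).1
  congr 2
  exact filter_congr fun a _ => by omega

lemma eZ_eq_sum_isZigzag {m i : ℕ} (hi1 : 1 ≤ i) (hin : i ≤ m + 1) :
    eZ (m + 1) i = ∑ τ : Equiv.Perm (Fin (m + 1)) with IsZigzag i τ,
      ((τ ⟨i - 1, by omega⟩ : ℕ) + 1) := by
  have hcard : Nat.card {q : Fin (m + 2) × Equiv.Perm (Fin (m + 1)) //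
      IsZigzag i q.2 ∧ q.1 ∈ Iic (Fin.castSucc (q.2 ⟨i - 1, by omega⟩))} = eZ (m + 1) i :=
    Nat.card_congr <| (Equiv.ofBijective _ Fin.consPerm_bijective).subtypeEquiv fun ⟨s, τ⟩ => by
      rw [mem_Iic]
      exact (isLinExtZ_consPerm_iff hi1 hin s τ).symm
  rw [← hcard, Nat.card_subtype_prod_mem (IsZigzag i) fun τ => Iic (Fin.castSucc (τ _))]
  simp

/-- for `1 ≤ i ≤ n`, `∑_{k=1}^n k·Ê_{n-1,k-1}(i) = e(Z_{n,i})`. -/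
theorem gentringer_weighted_sum (n i : ℕ) (hi1 : 1 ≤ i) (hin : i ≤ n) :
    ∑ k ∈ Finset.Icc 1 n, k * gentringer (n - 1) (k - 1) i = eZ n i := by
  obtain ⟨m, rfl⟩ : ∃ m, n = m + 1 := ⟨n - 1, by omega⟩
  rw [eZ_eq_sum_isZigzag hi1 hin,
    sum_add_one_eq_sum_mul_card_fiber _ _ (m + 1) fun τ _ => (τ _).2, Nat.add_sub_cancel]
  refine sum_congr rfl fun k _ => ?_
  rw [gentringer_eq_card_isZigzag hi1 hin, Nat.card_eq_fintype_card, Fintype.card_subtype,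
    filter_filter]
end

section
/- Let n ≥ 4 and 1 ≤ i ≤ n−3. The expected value of the i-th coordinate with respect to the uniform (normalized Lebesgue) measure on P_n(1) is (∫_{P_n(1)} x_i dλ)/λ(P_n(1)) = e(Z_{n−3,i})/((n−2)·E_{n−3}); equivalently, ∫_{P_n(1)} x_i dλ = e(Z_{n−3,i})/(n−2)!. -/
open scoped Classical

open MeasureTheory

/-! Reflecting every other coordinate, `t ↦ 1 - t`, preserves volume and turns the constraints
`d_j + d_{j+1} ≥ 1` of `P_n(1)` into the order relations of a zigzag poset, so `P_n(1)` is
congruent to the order polytope of the zigzag on `n - 3` elements. Likewise the region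
`{(d, t) : d ∈ P_n(1), 0 ≤ t ≤ d_i}` under the graph of the `i`-th coordinate is congruent to the
order polytope of `Z_{n-3,i}`, the new coordinate `t` playing the element `0 ⪯ i`. Finally, the
order polytope of a poset on `k` elements has volume `e/k!`: up to a null set the unit cube is the
disjoint union of the `k!` congruent simplices `x_{σ⁻¹ 0} < ⋯ < x_{σ⁻¹ (k-1)}`, and the order
polytope is the union of those indexed by linear extensions. -/

open Set Function
open scoped ENNReal

section OrderPolytope

variable {ι : Type*}

def orderPolytope (r : ι → ι → Prop) : Set (ι → ℝ) :=
  {x | (∀ j, x j ∈ Icc (0 : ℝ) 1) ∧ ∀ a b, r a b → x a ≤ x b}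

theorem measurableSet_orderPolytope [Countable ι] (r : ι → ι → Prop) :
    MeasurableSet (orderPolytope r) := by
  simp only [orderPolytope, ofPred_and, ofPred_forall]
  exact .inter (.iInter fun j => measurableSet_Icc.preimage (measurable_pi_apply j))
    (.iInter fun a => .iInter fun b => .iInter fun _ =>
      measurableSet_le (measurable_pi_apply a) (measurable_pi_apply b))

noncomputable def reflect (s : Set ι) (x : ι → ℝ) : ι → ℝ :=
  fun j => if j ∈ s then 1 - x j else x j

theorem measurePreserving_reflect [Fintype ι] (s : Set ι) :
    MeasurePreserving (reflect s) := by
  refine volume_preserving_pi (f := fun j t => if j ∈ s then 1 - t else t) fun j => ?_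
  split_ifs
  · exact Measure.measurePreserving_sub_left volume 1
  · exact MeasurePreserving.id volume

theorem reflect_mem_unitInterval_iff (s : Set ι) (x : ι → ℝ) (j : ι) :
    reflect s x j ∈ Icc (0 : ℝ) 1 ↔ x j ∈ Icc (0 : ℝ) 1 := by
  unfold reflect
  split_ifs
  exacts [Icc.mem_iff_one_sub_mem.symm, Iff.rfl]

theorem volume_compl_setOf_injective [Fintype ι] [DecidableEq ι] :
    volume {x : ι → ℝ | Injective x}ᶜ = 0 := by
  have hsub : {x : ι → ℝ | Injective x}ᶜ ⊆
      ⋃ a, ⋃ b, ⋃ (_ : a ≠ b),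
        ((LinearMap.proj (R := ℝ) (φ := fun _ : ι => ℝ) a - LinearMap.proj b).ker :
          Set (ι → ℝ)) := by
    intro x hx
    simp only [mem_compl_iff, mem_ofPred_eq, Injective, not_forall] at hx
    obtain ⟨a, b, hab, hne⟩ := hx
    simp only [mem_iUnion, SetLike.mem_coe, LinearMap.mem_ker]
    exact ⟨a, b, hne, by simp [hab]⟩
  refine measure_mono_null hsub (measure_iUnion_null fun a => measure_iUnion_null fun b =>
    measure_iUnion_null fun hab => Measure.addHaar_submodule _ _ fun htop => ?_)
  have : Pi.single (M := fun _ => ℝ) a 1 ∈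
      (LinearMap.proj (R := ℝ) (φ := fun _ : ι => ℝ) a - LinearMap.proj b).ker :=
    htop ▸ Submodule.mem_top
  simp [hab.symm] at this

end OrderPolytope

section CubeSimplex

variable {k : ℕ}

def cubeSimplex (σ : Equiv.Perm (Fin k)) : Set (Fin k → ℝ) :=
  {x | (∀ j, x j ∈ Icc (0 : ℝ) 1) ∧ StrictMono (x ∘ σ.symm)}

theorem measurableSet_cubeSimplex (σ : Equiv.Perm (Fin k)) : MeasurableSet (cubeSimplex σ) := by
  simp only [cubeSimplex, StrictMono, comp_apply, ofPred_and, ofPred_forall]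
  exact .inter (.iInter fun j => measurableSet_Icc.preimage (measurable_pi_apply j))
    (.iInter fun a => .iInter fun b => .iInter fun _ =>
      measurableSet_lt (measurable_pi_apply _) (measurable_pi_apply _))

theorem lt_iff_lt_of_mem_cubeSimplex {σ : Equiv.Perm (Fin k)} {x : Fin k → ℝ}
    (hx : x ∈ cubeSimplex σ) (a b : Fin k) : σ a < σ b ↔ x a < x b := by
  simpa using (hx.2.lt_iff_lt (a := σ a) (b := σ b)).symm

theorem injective_of_mem_cubeSimplex {σ : Equiv.Perm (Fin k)} {x : Fin k → ℝ}
    (hx : x ∈ cubeSimplex σ) : Injective x :=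
  hx.2.injective.of_comp_right σ.symm.surjective

theorem volume_cubeSimplex (σ : Equiv.Perm (Fin k)) :
    volume (cubeSimplex σ) = volume (cubeSimplex (1 : Equiv.Perm (Fin k))) := by
  let e := MeasurableEquiv.arrowCongr' σ (MeasurableEquiv.refl ℝ)
  have he : cubeSimplex σ = e ⁻¹' cubeSimplex 1 := by
    ext x
    have hex : e x = x ∘ σ.symm := rfl
    simp only [cubeSimplex, mem_preimage, mem_ofPred_eq, hex, comp_apply,
      Equiv.Perm.one_def, Equiv.refl_symm, Equiv.coe_refl, comp_id]
    exact and_congr_left fun _ => σ.symm.forall_congr_right.symm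
  rw [he, (volume_preserving_arrowCongr' σ _ (MeasurePreserving.id volume)).measure_preimage
    (measurableSet_cubeSimplex 1).nullMeasurableSet]

theorem pairwiseDisjoint_cubeSimplex :
    Pairwise (Disjoint on (cubeSimplex : Equiv.Perm (Fin k) → Set (Fin k → ℝ))) := by
  intro σ τ hne
  refine disjoint_left.2 fun x hσ hτ => hne ?_
  have hx := injective_of_mem_cubeSimplex hσ
  have hsymm := hx.comp_left (Tuple.unique_monotone hσ.2.monotone hτ.2.monotone)
  exact Equiv.symm_bijective.injective (Equiv.ext (congrFun hsymm))

theorem mem_cubeSimplex_sort {x : Fin k → ℝ} (hcube : ∀ j, x j ∈ Icc (0 : ℝ) 1)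
    (hx : Injective x) : x ∈ cubeSimplex (Tuple.sort x).symm :=
  ⟨hcube, by
    simpa using (Tuple.monotone_sort x).strictMono_of_injective (hx.comp (Tuple.sort x).injective)⟩

end CubeSimplex

section VolumeOrderPolytope

variable {k : ℕ} {r : Fin k → Fin k → Prop}

theorem orderPolytope_inter_setOf_injective (hr : ∀ a, ¬ r a a) :
    orderPolytope r ∩ {x | Injective x} =
      ⋃ σ ∈ Finset.univ.filter (fun σ : Equiv.Perm (Fin k) => ∀ a b, r a b → σ a < σ b),
        cubeSimplex σ := by
  ext x
  simp only [mem_inter_iff, mem_iUnion, Finset.mem_filter, Finset.mem_univ, true_and,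
    exists_prop]
  constructor
  · rintro ⟨⟨hcube, hle⟩, hx⟩
    have hσ := mem_cubeSimplex_sort hcube hx
    refine ⟨_, fun a b hab => (lt_iff_lt_of_mem_cubeSimplex hσ a b).2 ?_, hσ⟩
    exact (hle a b hab).lt_of_ne (hx.ne fun h => hr a (h ▸ hab))
  · rintro ⟨σ, hσ, hx⟩
    exact ⟨⟨hx.1, fun a b hab => ((lt_iff_lt_of_mem_cubeSimplex hx a b).1 (hσ a b hab)).le⟩,
      injective_of_mem_cubeSimplex hx⟩

theorem volume_orderPolytope_eq_card_mul (hr : ∀ a, ¬ r a a) :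
    volume (orderPolytope r) = Nat.card {σ : Equiv.Perm (Fin k) // ∀ a b, r a b → σ a < σ b} *
      volume (cubeSimplex (1 : Equiv.Perm (Fin k))) := by
  rw [← measure_inter_conull volume_compl_setOf_injective, orderPolytope_inter_setOf_injective hr,
    measure_biUnion_finset (pairwiseDisjoint_cubeSimplex.set_pairwise _)
      fun σ _ => measurableSet_cubeSimplex σ]
  simp only [volume_cubeSimplex, Finset.sum_const, nsmul_eq_mul, Nat.card_eq_fintype_card,
    Fintype.card_subtype]

theorem volume_cubeSimplex_one :
    volume (cubeSimplex (1 : Equiv.Perm (Fin k))) = (k.factorial : ℝ≥0∞)⁻¹ := by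
  have hcube : orderPolytope (fun _ _ : Fin k => False) = Icc 0 1 := by
    ext x
    simp [orderPolytope, Pi.le_def, forall_and]
  have h := volume_orderPolytope_eq_card_mul (r := fun _ _ : Fin k => False) fun _ h => h
  simp only [hcube, Real.volume_Icc_pi, Pi.one_apply, Pi.zero_apply, sub_zero, ENNReal.ofReal_one,
    Finset.prod_const_one, IsEmpty.forall_iff, implies_true, Nat.card_eq_fintype_card,
    Fintype.card_subtype_true, Fintype.card_perm, Fintype.card_fin] at h
  exact ENNReal.eq_inv_of_mul_eq_one_left (by rw [mul_comm, h])

theorem volume_orderPolytope (hr : ∀ a, ¬ r a a) :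
    volume (orderPolytope r) =
      Nat.card {σ : Equiv.Perm (Fin k) // ∀ a b, r a b → σ a < σ b} / (k.factorial : ℝ≥0∞) := by
  rw [volume_orderPolytope_eq_card_mul hr, volume_cubeSimplex_one, div_eq_mul_inv]

end VolumeOrderPolytope

section Zigzag

variable {m : ℕ}

def zigzag (p : ℕ) (a b : Fin m) : Prop :=
  ((b : ℕ) = a + 1 ∧ Odd ((a : ℕ) + p)) ∨ ((a : ℕ) = b + 1 ∧ Even ((b : ℕ) + p))

theorem zigzag_irrefl (p : ℕ) (a : Fin m) : ¬ zigzag p a a := by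
  simp [zigzag]

theorem forall_zigzag_imp_iff {p : ℕ} {Q : Fin m → Fin m → Prop} :
    (∀ a b, zigzag p a b → Q a b) ↔ ∀ j (h : j + 1 < m),
      if Even (j + p) then Q ⟨j + 1, h⟩ ⟨j, by omega⟩ else Q ⟨j, by omega⟩ ⟨j + 1, h⟩ := by
  constructor
  · intro H j h
    split_ifs with hj
    · exact H _ _ (Or.inr ⟨rfl, hj⟩)
    · exact H _ _ (Or.inl ⟨rfl, Nat.not_even_iff_odd.1 hj⟩)
  · rintro H ⟨a, ha⟩ ⟨b, hb⟩ (⟨rfl, hodd⟩ | ⟨rfl, heven⟩)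
    · simpa [Nat.not_even_iff_odd.2 hodd] using H a hb
    · simpa [heven] using H b ha

theorem downUp_iff (σ : Equiv.Perm (Fin m)) :
    DownUp σ ↔ ∀ a b, zigzag 0 a b → σ a < σ b := by
  rw [forall_zigzag_imp_iff]
  rfl

theorem Pn1_eq_preimage_reflect (n p : ℕ) :
    Pn1 n = reflect {j : Fin (n - 3) | Odd ((j : ℕ) + p)} ⁻¹' orderPolytope (zigzag p) := by
  ext x
  simp only [Pn1, orderPolytope, mem_preimage, mem_ofPred_eq, reflect_mem_unitInterval_iff,
    forall_zigzag_imp_iff]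
  refine and_congr_right fun _ => forall₂_congr fun j h => ?_
  split_ifs with hj
  · have h0 : ¬ Odd (j + p) := Nat.not_odd_iff_even.2 hj
    have h1 : Odd (j + 1 + p) := by rw [add_right_comm]; exact hj.add_one
    simp only [reflect, mem_ofPred_eq, h0, h1, if_true, if_false, sub_le_iff_le_add]
  · have h0 : Odd (j + p) := Nat.not_even_iff_odd.1 hj
    have h1 : ¬ Odd (j + 1 + p) := by
      rw [add_right_comm]; exact Nat.not_odd_iff_even.2 h0.add_one
    simp only [reflect, mem_ofPred_eq, h0, h1, if_true, if_false, sub_le_iff_le_add]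
    rw [add_comm]

end Zigzag

theorem measurableSet_Pn1 (n : ℕ) : MeasurableSet (Pn1 n) := by
  rw [Pn1_eq_preimage_reflect n 0]
  exact (measurePreserving_reflect _).measurable (measurableSet_orderPolytope _)

theorem volume_Pn1 (n : ℕ) :
    volume (Pn1 n) = eulerNumber (n - 3) / ((n - 3).factorial : ℝ≥0∞) := by
  rw [Pn1_eq_preimage_reflect n 0, (measurePreserving_reflect _).measure_preimage
    (measurableSet_orderPolytope _).nullMeasurableSet, volume_orderPolytope (zigzag_irrefl 0),
    eulerNumber, Nat.card_congr (Equiv.subtypeEquivRight downUp_iff)]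

section AugmentedZigzag

variable {m : ℕ}

theorem ZRel_succ_irrefl (j a : ℕ) : ¬ ZRel m (j + 1) a a := by
  simp only [ZRel]
  omega

theorem forall_ZRel_imp_iff (j : Fin m) {Q : Fin (m + 1) → Fin (m + 1) → Prop} :
    (∀ a b : Fin (m + 1), ZRel m (j + 1) a b → Q a b) ↔
      Q 0 j.succ ∧ ∀ a b : Fin m, zigzag j a b → Q a.succ b.succ := by
  have hzero : ∀ b : Fin (m + 1), ZRel m (j + 1) 0 b ↔ b = j.succ := by
    intro b
    simp only [ZRel, Fin.ext_iff, Fin.val_succ, Nat.odd_iff, Nat.even_iff, true_and]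
    omega
  have hsucc_zero : ∀ a : Fin m, ¬ ZRel m (j + 1) a.succ 0 := by
    intro a
    simp only [ZRel, Fin.val_succ, Nat.odd_iff, Nat.even_iff]
    omega
  have hsucc : ∀ a b : Fin m, ZRel m (j + 1) a.succ b.succ ↔ zigzag j a b := by
    intro a b
    simp only [ZRel, zigzag, Fin.val_succ, Nat.odd_iff, Nat.even_iff]
    omega
  constructor
  · intro H
    exact ⟨H _ _ ((hzero _).2 rfl), fun a b h => H _ _ ((hsucc a b).2 h)⟩
  · rintro ⟨h0, H⟩ a b hab
    cases a using Fin.cases with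
    | zero => exact (hzero b).1 hab ▸ h0
    | succ a =>
      cases b using Fin.cases with
      | zero => exact absurd hab (hsucc_zero a)
      | succ b => exact H a b ((hsucc a b).1 hab)

theorem reflect_image_succ_cons (s : Set (Fin m)) (t : ℝ) (d : Fin m → ℝ) :
    reflect (Fin.succ '' s) (Fin.cons t d : Fin (m + 1) → ℝ) = Fin.cons t (reflect s d) := by
  ext a
  cases a using Fin.cases <;>
    simp [reflect, Fin.succ_ne_zero, (Fin.succ_injective _).mem_set_image]

end AugmentedZigzag

section RegionBelowCoordinate

variable {n : ℕ}

theorem cons_mem_preimage_reflect_orderPolytope_ZRel_iff (j : Fin (n - 3)) (t : ℝ)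
    (d : Fin (n - 3) → ℝ) :
    (Fin.cons t d : Fin (n - 3 + 1) → ℝ) ∈
        reflect (Fin.succ '' {l : Fin (n - 3) | Odd ((l : ℕ) + j)}) ⁻¹'
          orderPolytope (fun a b : Fin (n - 3 + 1) => ZRel (n - 3) (j + 1) a b) ↔
      d ∈ Pn1 n ∧ t ∈ Icc 0 (d j) := by
  have hfix : reflect {l : Fin (n - 3) | Odd ((l : ℕ) + j)} d j = d j :=
    if_neg (by simp [← two_mul])
  rw [Pn1_eq_preimage_reflect n j]
  simp only [mem_preimage, reflect_image_succ_cons, orderPolytope, mem_ofPred_eq,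
    forall_ZRel_imp_iff j]
  simp only [Fin.forall_fin_succ, Fin.cons_zero, Fin.cons_succ, hfix]
  constructor
  · rintro ⟨⟨ht, hcube⟩, htd, hord⟩
    exact ⟨⟨hcube, hord⟩, ht.1, htd⟩
  · rintro ⟨⟨hcube, hord⟩, ht, htd⟩
    exact ⟨⟨⟨ht, htd.trans (hfix ▸ (hcube _).2)⟩, hcube⟩, htd, hord⟩

theorem volume_preserving_cons (k : ℕ) :
    MeasurePreserving (fun q : (Fin k → ℝ) × ℝ => (Fin.cons q.2 q.1 : Fin (k + 1) → ℝ))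
      (volume.prod volume) volume := by
  have h := (volume_preserving_piFinSuccAbove (fun _ : Fin (k + 1) => ℝ) 0).symm.comp
    (Measure.measurePreserving_swap (μ := (volume : Measure (Fin k → ℝ)))
      (ν := (volume : Measure ℝ)))
  have heq : ⇑(MeasurableEquiv.piFinSuccAbove (fun _ : Fin (k + 1) => ℝ) 0).symm ∘ Prod.swap =
      fun q : (Fin k → ℝ) × ℝ => (Fin.cons q.2 q.1 : Fin (k + 1) → ℝ) :=
    funext fun q => Fin.insertNth_zero' q.2 q.1
  rwa [heq] at h

theorem volume_region_below_coord_Pn1 (j : Fin (n - 3)) :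
    (volume : Measure (Fin (n - 3) → ℝ)).prod volume {q | q.1 ∈ Pn1 n ∧ q.2 ∈ Icc 0 (q.1 j)} =
      eZ (n - 3) (j + 1) / ((n - 2).factorial : ℝ≥0∞) := by
  have hZ := measurableSet_orderPolytope fun a b : Fin (n - 3 + 1) => ZRel (n - 3) (j + 1) a b
  have hregion : {q : (Fin (n - 3) → ℝ) × ℝ | q.1 ∈ Pn1 n ∧ q.2 ∈ Icc 0 (q.1 j)} =
      (fun q => Fin.cons q.2 q.1) ⁻¹'
        (reflect (Fin.succ '' {l : Fin (n - 3) | Odd ((l : ℕ) + j)}) ⁻¹'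
          orderPolytope fun a b : Fin (n - 3 + 1) => ZRel (n - 3) (j + 1) a b) := by
    ext ⟨d, t⟩
    exact (cons_mem_preimage_reflect_orderPolytope_ZRel_iff j t d).symm
  have hfac : (n - 3 + 1).factorial = (n - 2).factorial := by
    rw [show n - 3 + 1 = n - 2 by have := j.isLt; omega]
  rw [hregion, (volume_preserving_cons _).measure_preimage
      ((measurePreserving_reflect _).measurable hZ).nullMeasurableSet,
    (measurePreserving_reflect _).measure_preimage hZ.nullMeasurableSet,
    volume_orderPolytope (ZRel_succ_irrefl j ·), hfac]
  rfl

theorem setLIntegral_ofReal_eq_measure_prod {α : Type*} [MeasurableSpace α] {μ : Measure α}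
    [SFinite μ] {s : Set α} {f : α → ℝ} (hs : MeasurableSet s) (hf : Measurable f) :
    ∫⁻ x in s, ENNReal.ofReal (f x) ∂μ = μ.prod volume {q | q.1 ∈ s ∧ q.2 ∈ Icc 0 (f q.1)} := by
  rw [Measure.prod_apply (measurableSet_region_between_cc measurable_const hf hs),
    ← lintegral_indicator hs]
  congr 1 with x
  by_cases hx : x ∈ s <;>
    simp only [indicator, hx, if_true, if_false, preimage, mem_ofPred_eq, true_and, false_and,
      ofPred_mem_eq, ofPred_false, Real.volume_Icc, sub_zero, measure_empty]

theorem integral_coord_Pn1 (j : Fin (n - 3)) :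
    ∫ x in Pn1 n, x j = eZ (n - 3) (j + 1) / ((n - 2).factorial : ℝ) := by
  have hnonneg : 0 ≤ᵐ[volume.restrict (Pn1 n)] fun x : Fin (n - 3) → ℝ => x j :=
    (ae_restrict_iff' (measurableSet_Pn1 n)).2 (.of_forall fun x hx => (hx.1 j).1)
  rw [integral_eq_lintegral_of_nonneg_ae hnonneg (measurable_pi_apply j).aestronglyMeasurable,
    setLIntegral_ofReal_eq_measure_prod (measurableSet_Pn1 n) (measurable_pi_apply j),
    volume_region_below_coord_Pn1 j, ENNReal.toReal_div]
  simp

end RegionBelowCoordinate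

/-- for `n ≥ 4` and `1 ≤ i ≤ n-3`, the expected value of the `i`-th coordinate
under the uniform measure on `P_n(1)` is `e(Z_{n-3,i})/((n-2)·E_{n-3})`; equivalently, the
unnormalized integral is `e(Z_{n-3,i})/(n-2)!`. -/
theorem expected_coordinate_Pn1 (n i : ℕ) (hi1 : 1 ≤ i) (hi2 : i ≤ n - 3) :
    (∫ x in Pn1 n, x ⟨i - 1, by omega⟩) / (volume (Pn1 n)).toReal =
        (eZ (n - 3) i : ℝ) / ((n - 2) * eulerNumber (n - 3)) ∧
    (∫ x in Pn1 n, x ⟨i - 1, by omega⟩) =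
        (eZ (n - 3) i : ℝ) / (Nat.factorial (n - 2)) := by
  have hint : ∫ x in Pn1 n, x ⟨i - 1, by omega⟩ = eZ (n - 3) i / ((n - 2).factorial : ℝ) := by
    simpa [Nat.sub_add_cancel hi1] using integral_coord_Pn1 (n := n) ⟨i - 1, by omega⟩
  refine ⟨?_, hint⟩
  have hfac : ((n - 2).factorial : ℝ) = (n - 2) * (n - 3).factorial := by
    rw [show n - 2 = n - 3 + 1 by omega, Nat.factorial_succ]
    push_cast [Nat.cast_sub (show 3 ≤ n by omega)]
    ring
  rw [hint, volume_Pn1, ENNReal.toReal_div, hfac, ENNReal.toReal_natCast, ENNReal.toReal_natCast]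
  field_simp
end

section
/- Let p, q, r ∈ ℝ³ satisfy ‖q − p‖ = 1 and ‖r − q‖ = 1, and set a = ‖p‖, b = ‖q‖, c = ‖r‖. Assume the cross products p × q and q × r are both nonzero (in particular b ≠ 0). Define cos θ = ((p × q)·(q × r))/(‖p × q‖·‖q × r‖) and A = √((a+b−1)(a−b+1)(−a+b+1)(a+b+1)) · √((b+c−1)(b−c+1)(−b+c+1)(b+c+1)). Then (q − p)·(r − q) = (a² + c²)/2 − 1 − [(a² + b² − 1)(b² + c² − 1) − A·cos θ]/(4b²). -/
open scoped Classical

def dot3 (v w : Fin 3 → ℝ) : ℝ := ∑ j, v j * w j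

noncomputable def norm3 (v : Fin 3 → ℝ) : ℝ := Real.sqrt (dot3 v v)

def cross3 (v w : Fin 3 → ℝ) : Fin 3 → ℝ :=
  ![v 1 * w 2 - v 2 * w 1, v 2 * w 0 - v 0 * w 2, v 0 * w 1 - v 1 * w 0]

/-!
With unit edges, `2 p·q = a² + b² - 1` and `2 q·r = b² + c² - 1`. By Heron's formula the two
square roots in `A` are `2‖p × q‖` and `2‖q × r‖`, so `A cos θ = 4 (p × q)·(q × r)`, and the
Binet–Cauchy identity `(p × q)·(q × r) = (p·q)(q·r) - (p·r)(q·q)` turns the bracket into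
`4 b² (p·r)`. Expanding `(q - p)·(r - q)` with the same two relations gives
`(a² + c²)/2 - 1 - p·r`.
-/

open Matrix

lemma dot3_eq_dotProduct (v w : Fin 3 → ℝ) : dot3 v w = v ⬝ᵥ w := rfl

lemma cross3_eq_crossProduct (v w : Fin 3 → ℝ) : cross3 v w = v ⨯₃ w := rfl

lemma norm3_nonneg (v : Fin 3 → ℝ) : 0 ≤ norm3 v := Real.sqrt_nonneg _

lemma norm3_sq (v : Fin 3 → ℝ) : norm3 v ^ 2 = v ⬝ᵥ v :=
  Real.sq_sqrt (Finset.sum_nonneg fun i _ => mul_self_nonneg (v i))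

lemma norm3_eq_zero {v : Fin 3 → ℝ} : norm3 v = 0 ↔ v = 0 := by
  rw [← pow_eq_zero_iff two_ne_zero, norm3_sq, dotProduct_self_eq_zero]

lemma norm3_sub_sq (v w : Fin 3 → ℝ) :
    norm3 (w - v) ^ 2 = norm3 v ^ 2 + norm3 w ^ 2 - 2 * (v ⬝ᵥ w) := by
  simp only [norm3_sq, sub_dotProduct, dotProduct_sub, dotProduct_comm w v]
  ring

lemma norm3_mul_norm3_mul_dotProduct_div (v w : Fin 3 → ℝ) :
    norm3 v * norm3 w * (v ⬝ᵥ w / (norm3 v * norm3 w)) = v ⬝ᵥ w := by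
  by_cases h : norm3 v * norm3 w = 0
  · rcases mul_eq_zero.1 h with hv | hw
    · simp [norm3_eq_zero.1 hv]
    · simp [norm3_eq_zero.1 hw]
  · exact mul_div_cancel₀ _ h

-- `norm3 (u ⨯₃ v)` is twice the area of the triangle `0, u, v`: this is Heron's formula.
lemma heron_product_eq (u v : Fin 3 → ℝ) :
    (norm3 u + norm3 v - norm3 (v - u)) * (norm3 u - norm3 v + norm3 (v - u)) *
        (-norm3 u + norm3 v + norm3 (v - u)) * (norm3 u + norm3 v + norm3 (v - u)) =
      4 * norm3 (u ⨯₃ v) ^ 2 := by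
  have hprod : ∀ a b d : ℝ, (a + b - d) * (a - b + d) * (-a + b + d) * (a + b + d) =
      4 * a ^ 2 * b ^ 2 - (a ^ 2 + b ^ 2 - d ^ 2) ^ 2 := fun a b d => by ring
  rw [hprod, norm3_sub_sq, norm3_sq (u ⨯₃ v), cross_dot_cross, norm3_sq, norm3_sq,
    dotProduct_comm v u]
  ring

lemma sqrt_heron_product_of_norm3_sub_eq_one {u v : Fin 3 → ℝ} (h : norm3 (v - u) = 1) :
    Real.sqrt ((norm3 u + norm3 v - 1) * (norm3 u - norm3 v + 1) * (-norm3 u + norm3 v + 1) *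
        (norm3 u + norm3 v + 1)) = 2 * norm3 (u ⨯₃ v) := by
  rw [← h, heron_product_eq, show 4 * norm3 (u ⨯₃ v) ^ 2 = (2 * norm3 (u ⨯₃ v)) ^ 2 by ring,
    Real.sqrt_sq (by positivity [norm3_nonneg (u ⨯₃ v)])]

lemma two_mul_dotProduct_of_norm3_sub_eq_one {u v : Fin 3 → ℝ} (h : norm3 (v - u) = 1) :
    2 * (u ⬝ᵥ v) = norm3 u ^ 2 + norm3 v ^ 2 - 1 := by
  linarith [norm3_sub_sq u v, h ▸ one_pow (M := ℝ) 2]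

section UnitEdges

variable {p q r : Fin 3 → ℝ} (hpq : norm3 (q - p) = 1) (hqr : norm3 (r - q) = 1)
include hpq hqr

lemma sub_dotProduct_sub_of_unit_edges :
    (q - p) ⬝ᵥ (r - q) = (norm3 p ^ 2 + norm3 r ^ 2) / 2 - 1 - p ⬝ᵥ r := by
  have hexpand : (q - p) ⬝ᵥ (r - q) = p ⬝ᵥ q + q ⬝ᵥ r - q ⬝ᵥ q - p ⬝ᵥ r := by
    simp only [sub_dotProduct, dotProduct_sub]
    ring
  rw [hexpand, ← norm3_sq q]
  linarith [two_mul_dotProduct_of_norm3_sub_eq_one hpq, two_mul_dotProduct_of_norm3_sub_eq_one hqr]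

lemma cross_dot_cross_of_unit_edges :
    (norm3 p ^ 2 + norm3 q ^ 2 - 1) * (norm3 q ^ 2 + norm3 r ^ 2 - 1) -
        4 * (p ⨯₃ q ⬝ᵥ q ⨯₃ r) = 4 * norm3 q ^ 2 * (p ⬝ᵥ r) := by
  rw [← two_mul_dotProduct_of_norm3_sub_eq_one hpq, ← two_mul_dotProduct_of_norm3_sub_eq_one hqr,
    cross_dot_cross, norm3_sq q]
  ring

end UnitEdges

theorem turning_angle_formula_general (p q r : Fin 3 → ℝ)
    (hpq : norm3 (q - p) = 1) (hqr : norm3 (r - q) = 1)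
    (a b c : ℝ) (ha : a = norm3 p) (hb : b = norm3 q) (hc : c = norm3 r)
    (hcross1 : cross3 p q ≠ 0)
    (cosθ : ℝ)
    (hθ : cosθ = dot3 (cross3 p q) (cross3 q r) / (norm3 (cross3 p q) * norm3 (cross3 q r)))
    (A : ℝ)
    (hA : A = Real.sqrt ((a + b - 1) * (a - b + 1) * (-a + b + 1) * (a + b + 1)) *
        Real.sqrt ((b + c - 1) * (b - c + 1) * (-b + c + 1) * (b + c + 1))) :
    dot3 (q - p) (r - q) =
      (a ^ 2 + c ^ 2) / 2 - 1 -
        ((a ^ 2 + b ^ 2 - 1) * (b ^ 2 + c ^ 2 - 1) - A * cosθ) / (4 * b ^ 2) := by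
  have hq : norm3 q ≠ 0 := by
    rw [Ne, norm3_eq_zero]
    rintro rfl
    exact hcross1 (map_zero (crossProduct p))
  have hAcos : A * cosθ = 4 * (p ⨯₃ q ⬝ᵥ q ⨯₃ r) := by
    rw [hA, ha, hb, hc, sqrt_heron_product_of_norm3_sub_eq_one hpq,
      sqrt_heron_product_of_norm3_sub_eq_one hqr, hθ, cross3_eq_crossProduct,
      cross3_eq_crossProduct, dot3_eq_dotProduct]
    linear_combination 4 * norm3_mul_norm3_mul_dotProduct_div (p ⨯₃ q) (q ⨯₃ r)
  rw [hAcos, ha, hb, hc, cross_dot_cross_of_unit_edges hpq hqr,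
    mul_div_cancel_left₀ _ (by positivity), dot3_eq_dotProduct,
    sub_dotProduct_sub_of_unit_edges hpq hqr]

/-- with `‖q - p‖ = ‖r - q‖ = 1`, `a = ‖p‖`, `b = ‖q‖`, `c = ‖r‖`,
`cos θ = ((p×q)·(q×r))/(‖p×q‖·‖q×r‖)` and
`A = √((a+b-1)(a-b+1)(-a+b+1)(a+b+1))·√((b+c-1)(b-c+1)(-b+c+1)(b+c+1))`, we have
`(q-p)·(r-q) = (a²+c²)/2 - 1 - ((a²+b²-1)(b²+c²-1) - A·cos θ)/(4b²)`. -/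
theorem turning_angle_formula (p q r : Fin 3 → ℝ)
    (hpq : norm3 (q - p) = 1) (hqr : norm3 (r - q) = 1)
    (a b c : ℝ) (ha : a = norm3 p) (hb : b = norm3 q) (hc : c = norm3 r)
    (hcross1 : cross3 p q ≠ 0) (hcross2 : cross3 q r ≠ 0)
    (cosθ : ℝ)
    (hθ : cosθ = dot3 (cross3 p q) (cross3 q r) / (norm3 (cross3 p q) * norm3 (cross3 q r)))
    (A : ℝ)
    (hA : A = Real.sqrt ((a + b - 1) * (a - b + 1) * (-a + b + 1) * (a + b + 1)) *
        Real.sqrt ((b + c - 1) * (b - c + 1) * (-b + c + 1) * (b + c + 1))) :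
    dot3 (q - p) (r - q) =
      (a ^ 2 + c ^ 2) / 2 - 1 -
        ((a ^ 2 + b ^ 2 - 1) * (b ^ 2 + c ^ 2 - 1) - A * cosθ) / (4 * b ^ 2) :=
  turning_angle_formula_general p q r hpq hqr a b c ha hb hc hcross1 cosθ hθ A hA
end
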